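/- arXiv:1511.03554 — 6 statements merged into one kernel-verified Lean document; each statement's English description precedes it below -/
import Mathlib

section
/- Let d ≥ 1. For every biquadratic form BQ in d+d variables satisfying BQ(x,y) ≥ 0 for all x, y ∈ ℝ^d and BQ(x,x) = 0 for all x ∈ ℝ^d, there exists a unique map c ∈ C_+ such that BQ(x,y) = y^⊤ c(x) y for all x, y ∈ ℝ^d. (Thus C_+ is in one-to-one correspondence with the set of nonnegative biquadratic forms vanishing on the diagonal.) -/
/-!
Polarization recovers the symmetric matrix of a quadratic form from its values, so the only
candidate is `c(x) = polarMatrix (BQ x ·)`, with entries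
`(BQ(x, eᵢ + eⱼ) - BQ(x, eᵢ) - BQ(x, eⱼ)) / 2`. These entries are combinations of the quadratic
forms `BQ(·, v)`, hence homogeneous quadratic polynomials in `x`; `c(x)` is positive semidefinite
because `BQ ≥ 0`, and `xᵀ c(x) x = BQ(x, x) = 0` forces `c(x) x = 0`.
-/

open Matrix

/-- A function `ℝ^d → ℝ` is (the evaluation of) a homogeneous polynomial of degree `k`. -/
def IsHomPolyFun (d k : ℕ) (f : (Fin d → ℝ) → ℝ) : Prop :=
  ∃ P : MvPolynomial (Fin d) ℝ, P.IsHomogeneous k ∧ ∀ x, f x = MvPolynomial.eval x P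

lemma Matrix.IsSymm.mulVec_eq_zero_of_dotProduct_mulVec_eq_zero {n : Type*} [Fintype n]
    {A : Matrix n n ℝ} (hA : A.IsSymm) (hnonneg : ∀ y, 0 ≤ y ⬝ᵥ A *ᵥ y) {x : n → ℝ}
    (hx : x ⬝ᵥ A *ᵥ x = 0) :
    A *ᵥ x = 0 := by
  have hPSD : A.PosSemidef :=
    .of_dotProduct_mulVec_nonneg (isHermitian_iff_isSymm.mpr hA) (by simpa using hnonneg)
  exact (hPSD.dotProduct_mulVec_zero_iff x).mp (by simpa using hx)

section PolarMatrix

variable {n : Type*} [DecidableEq n]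

noncomputable def polarMatrix (q : (n → ℝ) → ℝ) : Matrix n n ℝ :=
  of fun i j => (q (Pi.single i 1 + Pi.single j 1) - q (Pi.single i 1) - q (Pi.single j 1)) / 2

lemma polarMatrix_isSymm (q : (n → ℝ) → ℝ) : (polarMatrix q).IsSymm :=
  IsSymm.ext fun i j => by simp only [polarMatrix, of_apply, add_comm]; ring

variable [Fintype n]

lemma polarMatrix_quadForm (M : Matrix n n ℝ) :
    polarMatrix (fun y => y ⬝ᵥ M *ᵥ y) = (2 : ℝ)⁻¹ • (M + Mᵀ) := by
  ext i j
  simp only [polarMatrix, of_apply, mulVec_add, dotProduct_add, add_dotProduct, mulVec_single,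
    single_dotProduct, Matrix.smul_apply, Matrix.add_apply, MulOpposite.op_one,
    col_apply, one_smul, one_mul, transpose_apply, smul_eq_mul]
  ring

lemma Matrix.IsSymm.polarMatrix_quadForm {M : Matrix n n ℝ} (hM : M.IsSymm) :
    polarMatrix (fun y => y ⬝ᵥ M *ᵥ y) = M := by
  rw [_root_.polarMatrix_quadForm, hM.eq, ← two_smul ℝ M, smul_smul, inv_mul_cancel₀ two_ne_zero,
    one_smul]

lemma dotProduct_polarMatrix_quadForm_mulVec (M : Matrix n n ℝ) (y : n → ℝ) :
    y ⬝ᵥ polarMatrix (fun y => y ⬝ᵥ M *ᵥ y) *ᵥ y = y ⬝ᵥ M *ᵥ y := by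
  rw [polarMatrix_quadForm, smul_mulVec, dotProduct_smul, add_mulVec, dotProduct_add,
    mulVec_transpose, dotProduct_comm y (vecMul y M), ← dotProduct_mulVec, smul_eq_mul]
  ring

end PolarMatrix

section IsHomPolyFun

variable {d k : ℕ} {f g : (Fin d → ℝ) → ℝ}

lemma IsHomPolyFun.sub (hf : IsHomPolyFun d k f) (hg : IsHomPolyFun d k g) :
    IsHomPolyFun d k (fun x => f x - g x) := by
  obtain ⟨P, hP, hfP⟩ := hf
  obtain ⟨Q, hQ, hgQ⟩ := hg
  exact ⟨P - Q, hP.sub hQ, fun x => by simp [hfP, hgQ]⟩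

lemma IsHomPolyFun.div_const (hf : IsHomPolyFun d k f) (r : ℝ) :
    IsHomPolyFun d k (fun x => f x / r) := by
  obtain ⟨P, hP, hfP⟩ := hf
  exact ⟨MvPolynomial.C r⁻¹ * P, hP.C_mul _, fun x => by simp [hfP, div_eq_inv_mul]⟩

lemma isHomPolyFun_quadForm (M : Matrix (Fin d) (Fin d) ℝ) :
    IsHomPolyFun d 2 (fun x => x ⬝ᵥ M *ᵥ x) := by
  refine ⟨∑ i, ∑ j, MvPolynomial.C (M i j) * MvPolynomial.X i * MvPolynomial.X j,
    .sum _ _ _ fun i _ => .sum _ _ _ fun j _ => ?_, fun x => ?_⟩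
  · exact (MvPolynomial.isHomogeneous_C_mul_X _ _).mul (MvPolynomial.isHomogeneous_X _ _)
  · simp only [map_sum, map_mul, MvPolynomial.eval_C, MvPolynomial.eval_X, dotProduct, mulVec,
      Finset.mul_sum]
    exact Finset.sum_congr rfl fun i _ => Finset.sum_congr rfl fun j _ => by ring

lemma isHomPolyFun_polarMatrix_apply {BQ : (Fin d → ℝ) → (Fin d → ℝ) → ℝ}
    (hquad : ∀ y, ∃ M : Matrix (Fin d) (Fin d) ℝ, ∀ x, BQ x y = x ⬝ᵥ M *ᵥ x) (i j : Fin d) :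
    IsHomPolyFun d 2 (fun x => polarMatrix (BQ x) i j) := by
  have hBQ (y : Fin d → ℝ) : IsHomPolyFun d 2 (fun x => BQ x y) := by
    obtain ⟨M, hM⟩ := hquad y
    simpa only [hM] using isHomPolyFun_quadForm M
  exact (((hBQ _).sub (hBQ _)).sub (hBQ _)).div_const 2

end IsHomPolyFun

theorem stmt1_general (d : ℕ)
    (BQ : (Fin d → ℝ) → (Fin d → ℝ) → ℝ)
    -- `BQ` is a quadratic form in `x` for each fixed `y`:
    (hquadx : ∀ y : Fin d → ℝ, ∃ M : Matrix (Fin d) (Fin d) ℝ,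
      ∀ x, BQ x y = x ⬝ᵥ M.mulVec x)
    -- `BQ` is a quadratic form in `y` for each fixed `x`:
    (hquady : ∀ x : Fin d → ℝ, ∃ M : Matrix (Fin d) (Fin d) ℝ,
      ∀ y, BQ x y = y ⬝ᵥ M.mulVec y)
    (hnonneg : ∀ x y, 0 ≤ BQ x y)
    (hdiag : ∀ x, BQ x x = 0) :
    ∃! c : (Fin d → ℝ) → Matrix (Fin d) (Fin d) ℝ,
      ((∀ i j, IsHomPolyFun d 2 (fun x => c x i j)) ∧
        (∀ x, (c x).IsSymm) ∧
        (∀ x, (c x).mulVec x = 0) ∧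
        (∀ x, ∀ y : Fin d → ℝ, 0 ≤ y ⬝ᵥ (c x).mulVec y)) ∧
      (∀ x y, BQ x y = y ⬝ᵥ (c x).mulVec y) := by
  have hrep (x y : Fin d → ℝ) : BQ x y = y ⬝ᵥ polarMatrix (BQ x) *ᵥ y := by
    obtain ⟨M, hM⟩ := hquady x
    rw [show BQ x = fun y => y ⬝ᵥ M *ᵥ y from funext hM, dotProduct_polarMatrix_quadForm_mulVec]
  have hpsd (x y : Fin d → ℝ) : 0 ≤ y ⬝ᵥ polarMatrix (BQ x) *ᵥ y := hrep x y ▸ hnonneg x y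
  refine ⟨fun x => polarMatrix (BQ x), ⟨⟨isHomPolyFun_polarMatrix_apply hquadx,
    fun x => polarMatrix_isSymm _, fun x => ?_, hpsd⟩, hrep⟩, ?_⟩
  · exact (polarMatrix_isSymm _).mulVec_eq_zero_of_dotProduct_mulVec_eq_zero (hpsd x)
      (by rw [← hrep, hdiag])
  · rintro c ⟨⟨-, hsymm, -, -⟩, hrepc⟩
    funext x
    rw [show BQ x = fun y => y ⬝ᵥ c x *ᵥ y from funext (hrepc x)]
    exact (hsymm x).polarMatrix_quadForm.symm

/-- Every nonnegative biquadratic form `BQ` in `d+d` variables vanishing on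
the diagonal corresponds, via `BQ(x,y) = yᵀ c(x) y`, to a unique `c ∈ C_+`, i.e. a unique map
`c : ℝ^d → S^d` with homogeneous degree-2 polynomial entries, `c(x) x = 0` for all `x`, and
`c(x)` positive semidefinite for all `x`. -/
theorem stmt1 (d : ℕ) (hd : 1 ≤ d)
    (BQ : (Fin d → ℝ) → (Fin d → ℝ) → ℝ)
    -- `BQ` is a quadratic form in `x` for each fixed `y`:
    (hquadx : ∀ y : Fin d → ℝ, ∃ M : Matrix (Fin d) (Fin d) ℝ,
      ∀ x, BQ x y = x ⬝ᵥ M.mulVec x)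
    -- `BQ` is a quadratic form in `y` for each fixed `x`:
    (hquady : ∀ x : Fin d → ℝ, ∃ M : Matrix (Fin d) (Fin d) ℝ,
      ∀ y, BQ x y = y ⬝ᵥ M.mulVec y)
    (hnonneg : ∀ x y, 0 ≤ BQ x y)
    (hdiag : ∀ x, BQ x x = 0) :
    ∃! c : (Fin d → ℝ) → Matrix (Fin d) (Fin d) ℝ,
      ((∀ i j, IsHomPolyFun d 2 (fun x => c x i j)) ∧
        (∀ x, (c x).IsSymm) ∧
        (∀ x, (c x).mulVec x = 0) ∧
        (∀ x, ∀ y : Fin d → ℝ, 0 ≤ y ⬝ᵥ (c x).mulVec y)) ∧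
      (∀ x y, BQ x y = y ⬝ᵥ (c x).mulVec y) :=
  stmt1_general d BQ hquadx hquady hnonneg hdiag
end

section
/- Let d ≥ 1. The set C is a real linear space and its dimension equals 2·binomial(d,4) + 3·binomial(d,3) + binomial(d,2) = d²(d²−1)/12 (with the convention binomial(d,k) = 0 for k > d). -/
open Matrix

/-- The set `C` of maps `c : ℝ^d → S^d` with homogeneous degree-2 polynomial entries
and `c(x) x = 0` for all `x`, viewed as a subset of the space of all maps
`ℝ^d → ℝ^{d×d}`. -/
def setC (d : ℕ) : Set ((Fin d → ℝ) → Matrix (Fin d) (Fin d) ℝ) :=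
  {c | (∀ i j, IsHomPolyFun d 2 (fun x => c x i j)) ∧
       (∀ x, (c x).IsSymm) ∧ (∀ x, (c x).mulVec x = 0)}

/-!
`C` is identified, via evaluation, with the kernel of `A ↦ A x` on symmetric matrices of
quadratic forms, a map onto vectors of cubic forms. Surjectivity comes from Euler's identity:
for cubic `f`, the symmetric matrix `(2 ∂_b f_a + 2 ∂_a f_b - ∑_c x_c ∂_a ∂_b f_c) / 6`
is sent to `f`. Hence `dim C = binom(d+1,2)² - d·binom(d+2,3)`, which is the stated sum of
binomials.
-/

open MvPolynomial Finset Module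

namespace MvPolynomial

variable {σ R : Type*} [CommSemiring R]

theorem pderiv_pderiv_comm (i j : σ) (p : MvPolynomial σ R) :
    pderiv i (pderiv j p) = pderiv j (pderiv i p) := by
  classical
  induction p using MvPolynomial.induction_on with
  | C a => simp
  | add p q hp hq => simp only [map_add, hp, hq]
  | mul_X p k hp =>
    simp only [pderiv_mul, pderiv_X, map_add, hp, Pi.single_apply]
    split_ifs <;> simp [add_comm, add_left_comm]

instance [Finite σ] (n : ℕ) : Module.Finite R (homogeneousSubmodule σ R n) :=
  Module.Finite.iff_fg.mpr (homogeneousSubmodule_fg σ R n)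

theorem finrank_homogeneousSubmodule [Fintype σ] [StrongRankCondition R] (n : ℕ) :
    finrank R (homogeneousSubmodule σ R n) = (Fintype.card σ + n - 1).choose n := by
  classical
  have hdeg :
      {s : σ →₀ ℕ | s.degree = n} = ((univ : Finset σ).finsuppAntidiag n : Set _) := by
    ext s
    simp [mem_finsuppAntidiag, Finsupp.degree_eq_sum]
  rw [homogeneousSubmodule_eq_finsupp_supported, hdeg]
  change finrank R (restrictSupport R _) = _
  rw [finrank_eq_nat_card_basis (basisRestrictSupport R _), Nat.card_coe_set_eq,
    Set.ncard_coe_finset, card_finsuppAntidiag_nat_eq_choose, card_univ]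

end MvPolynomial

namespace Matrix

variable (n R α : Type*) [Semiring R] [AddCommMonoid α] [Module R α]

def symmetricSubmodule : Submodule R (Matrix n n α) where
  carrier := {A | A.IsSymm}
  add_mem' := IsSymm.add
  zero_mem' := isSymm_zero
  smul_mem' c _ h := h.smul c

variable {n R α}

def symmetricSubmoduleEquivSym2 : symmetricSubmodule n R α ≃ₗ[R] (Sym2 n → α) where
  toFun A := Sym2.lift ⟨A.1, fun i j => (A.2.apply i j).symm⟩
  invFun g := ⟨of fun i j => g s(i, j), by ext i j; simp [Sym2.eq_swap]⟩
  map_add' A B := by ext s; induction s; rfl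
  map_smul' c A := by ext s; induction s; rfl
  left_inv A := rfl
  right_inv g := by ext s; induction s; rfl

theorem finrank_symmetricSubmodule [Fintype n] [StrongRankCondition R] [Module.Free R α]
    [Module.Finite R α] :
    finrank R (symmetricSubmodule n R α) = (Fintype.card n + 1).choose 2 * finrank R α := by
  rw [symmetricSubmoduleEquivSym2.finrank_eq, finrank_pi_fintype, sum_const, card_univ,
    Sym2.card, smul_eq_mul]

end Matrix

noncomputable section

section MulVecX

variable {σ K : Type*} [Fintype σ] [Field K]

def mulVecX (m : ℕ) :
    Matrix σ σ (homogeneousSubmodule σ K m) →ₗ[K]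
      σ → homogeneousSubmodule σ K (m + 1) where
  toFun A i := ⟨∑ j, (A i j : MvPolynomial σ K) * X j,
    IsHomogeneous.sum _ _ _ fun j _ => (A i j).2.mul (isHomogeneous_X K j)⟩
  map_add' A B := by ext i : 2; simp [add_mul, sum_add_distrib]
  map_smul' c A := by ext i : 2; simp [smul_sum]

def mulVecXSection (m : ℕ) (f : σ → MvPolynomial σ K) : Matrix σ σ (MvPolynomial σ K) :=
  of fun a b => ((m : K) + 2)⁻¹ • (pderiv b (f a) + pderiv a (f b)) -
    (((m : K) + 2) * ((m : K) + 1))⁻¹ • ∑ c, X c * pderiv a (pderiv b (f c))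

variable {m : ℕ} {f : σ → MvPolynomial σ K}

theorem mulVecXSection_isSymm : (mulVecXSection m f).IsSymm := by
  ext a b
  simp [mulVecXSection, add_comm, pderiv_pderiv_comm]

theorem isHomogeneous_mulVecXSection (hf : ∀ i, (f i).IsHomogeneous (m + 2)) (a b : σ) :
    (mulVecXSection m f a b).IsHomogeneous (m + 1) := by
  refine Submodule.sub_mem (homogeneousSubmodule σ K (m + 1))
    (Submodule.smul_mem _ _ ?_) (Submodule.smul_mem _ _ ?_)
  · exact (hf a).pderiv.add (hf b).pderiv
  · refine IsHomogeneous.sum _ _ _ fun c _ => ?_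
    rw [mul_comm]
    exact (hf c).pderiv.pderiv.mul (isHomogeneous_X K c)

theorem sum_mulVecXSection_mul_X [CharZero K] (hf : ∀ i, (f i).IsHomogeneous (m + 2)) (a : σ) :
    ∑ b, mulVecXSection m f a b * X b = f a := by
  have euler_f : ∑ b, X b * pderiv b (f a) = ((m : K) + 2) • f a := by
    rw [(hf a).sum_X_mul_pderiv, ← Nat.cast_smul_eq_nsmul K]; push_cast; rfl
  have euler_df (c : σ) :
      ∑ b, X b * pderiv b (pderiv a (f c)) = ((m : K) + 1) • pderiv a (f c) := by
    rw [(hf c).pderiv.sum_X_mul_pderiv, ← Nat.cast_smul_eq_nsmul K]; push_cast; rfl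
  set T := ∑ c, X c * pderiv a (f c)
  calc ∑ b, mulVecXSection m f a b * X b
      = ((m : K) + 2)⁻¹ • (∑ b, X b * pderiv b (f a) + T) -
          (((m : K) + 2) * ((m : K) + 1))⁻¹ •
            ∑ c, X c * ∑ b, X b * pderiv b (pderiv a (f c)) := by
        simp only [mulVecXSection, of_apply, sub_mul, add_mul, smul_mul_assoc, sum_sub_distrib,
          sum_add_distrib, ← smul_sum, sum_mul, mul_sum, T]
        rw [sum_comm (f := fun b c => X c * _ * X b)]
        simp only [pderiv_pderiv_comm a, mul_comm, mul_left_comm]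
    _ = ((m : K) + 2)⁻¹ • (((m : K) + 2) • f a + T) -
          (((m : K) + 2) * ((m : K) + 1))⁻¹ • ((m : K) + 1) • T := by
        simp only [euler_f, euler_df, mul_smul_comm, ← smul_sum, T]
    _ = f a := by
        have h2 : (m : K) + 2 ≠ 0 := by exact_mod_cast (m + 1).succ_ne_zero
        have h1 : (m : K) + 1 ≠ 0 := by exact_mod_cast m.succ_ne_zero
        match_scalars
        · field_simp
        · field_simp; ring

theorem mulVecX_domRestrict_surjective [CharZero K] (m : ℕ) :
    Function.Surjective ((mulVecX (σ := σ) (K := K) (m + 1)).domRestrict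
      (symmetricSubmodule σ K (homogeneousSubmodule σ K (m + 1)))) := by
  intro f
  have hf (i : σ) : (f i : MvPolynomial σ K).IsHomogeneous (m + 2) := (f i).2
  refine ⟨⟨of fun a b => ⟨mulVecXSection m (fun i => f i) a b,
    isHomogeneous_mulVecXSection hf a b⟩, ?_⟩, ?_⟩
  · exact IsSymm.ext fun a b => Subtype.ext (mulVecXSection_isSymm.apply a b)
  · ext a : 2
    exact sum_mulVecXSection_mul_X hf a

theorem finrank_ker_mulVecX_add [CharZero K] (m : ℕ) :
    finrank K (LinearMap.ker ((mulVecX (σ := σ) (K := K) (m + 1)).domRestrict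
        (symmetricSubmodule σ K (homogeneousSubmodule σ K (m + 1))))) +
      Fintype.card σ * (Fintype.card σ + m + 1).choose (m + 2) =
    (Fintype.card σ + 1).choose 2 * (Fintype.card σ + m).choose (m + 1) := by
  have rank_nullity := LinearMap.finrank_range_add_finrank_ker
    (V := symmetricSubmodule σ K (homogeneousSubmodule σ K (m + 1)))
    (V₂ := σ → homogeneousSubmodule σ K (m + 1 + 1))
    ((mulVecX (m + 1)).domRestrict (symmetricSubmodule σ K (homogeneousSubmodule σ K (m + 1))))
  rw [LinearMap.range_eq_top.2 (mulVecX_domRestrict_surjective m), finrank_top,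
    finrank_pi_fintype, sum_const, card_univ, smul_eq_mul, finrank_symmetricSubmodule,
    finrank_homogeneousSubmodule, finrank_homogeneousSubmodule] at rank_nullity
  rw [add_comm]
  convert rank_nullity using 4 <;> omega

end MulVecX

section Evaluation

variable {σ K : Type*} [Field K]

def evalMatrix (m : ℕ) :
    Matrix σ σ (homogeneousSubmodule σ K m) →ₗ[K] (σ → K) → Matrix σ σ K where
  toFun A x := of fun i j => eval x (A i j : MvPolynomial σ K)
  map_add' A B := by ext x i j; simp
  map_smul' c A := by ext x i j; simp

variable [Infinite K] {m : ℕ} {A : Matrix σ σ (homogeneousSubmodule σ K m)}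

theorem evalMatrix_injective : Function.Injective (evalMatrix (σ := σ) (K := K) m) :=
  fun _ _ h => Matrix.ext fun i j => Subtype.ext <| MvPolynomial.funext fun x =>
    congrFun₂ (congrFun h x) i j

theorem isSymm_iff_forall_isSymm_evalMatrix : A.IsSymm ↔ ∀ x, (evalMatrix m A x).IsSymm :=
  ⟨fun h x => IsSymm.ext fun i j => by simp [evalMatrix, h.apply i j],
    fun h => evalMatrix_injective (funext h)⟩

theorem mulVecX_eq_zero_iff [Fintype σ] :
    mulVecX m A = 0 ↔ ∀ x, evalMatrix m A x *ᵥ x = 0 := by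
  have eval_mulVecX (x : σ → K) (i : σ) :
      eval x (mulVecX m A i : MvPolynomial σ K) = (evalMatrix m A x *ᵥ x) i := by
    simp [mulVecX, evalMatrix, mulVec, dotProduct]
  refine ⟨fun h x => funext fun i => by rw [← eval_mulVecX, h]; simp, fun h => ?_⟩
  ext i : 2
  exact MvPolynomial.funext fun x => by simp [eval_mulVecX, h x]

end Evaluation

end

theorem setC_eq_map_ker (d : ℕ) :
    setC d = Submodule.map (evalMatrix 2 ∘ₗ (symmetricSubmodule _ ℝ _).subtype)
      (LinearMap.ker ((mulVecX 2).domRestrict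
        (symmetricSubmodule (Fin d) ℝ (homogeneousSubmodule (Fin d) ℝ 2)))) := by
  ext c
  constructor
  · rintro ⟨hpoly, hsymm, hker⟩
    choose P hP hPeval using hpoly
    let A : Matrix (Fin d) (Fin d) (homogeneousSubmodule (Fin d) ℝ 2) :=
      of fun i j => ⟨P i j, hP i j⟩
    have hA : evalMatrix 2 A = c := by
      funext x; ext i j; exact (hPeval i j x).symm
    exact ⟨⟨A, isSymm_iff_forall_isSymm_evalMatrix.2 (hA ▸ hsymm)⟩,
      mulVecX_eq_zero_iff.2 (hA ▸ hker), hA⟩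
  · rintro ⟨⟨A, hA⟩, hker, rfl⟩
    exact ⟨fun i j => ⟨A i j, (A i j).2, fun x => rfl⟩,
      isSymm_iff_forall_isSymm_evalMatrix.1 hA, mulVecX_eq_zero_iff.1 hker⟩

theorem choose_sum_add_mul_choose_three (d : ℕ) :
    2 * d.choose 4 + 3 * d.choose 3 + d.choose 2 + d * (d + 2).choose 3 =
      (d + 1).choose 2 * (d + 1).choose 2 := by
  qify
  simp only [Nat.cast_choose_eq_descPochhammer_div (K := ℚ), descPochhammer_succ_eval,
    descPochhammer_zero, Polynomial.eval_one, Nat.factorial]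
  push_cast
  ring

theorem choose_sum_eq_sq_mul_sq_sub_one_div (d : ℕ) :
    2 * d.choose 4 + 3 * d.choose 3 + d.choose 2 = d ^ 2 * (d ^ 2 - 1) / 12 := by
  have h : 12 * (2 * d.choose 4 + 3 * d.choose 3 + d.choose 2) + d ^ 2 = d ^ 2 * d ^ 2 := by
    qify
    simp only [Nat.cast_choose_eq_descPochhammer_div (K := ℚ), descPochhammer_succ_eval,
      descPochhammer_zero, Polynomial.eval_one, Nat.factorial]
    push_cast
    ring
  rw [Nat.mul_sub_one, ← h]
  omega

theorem stmt3_general (d : ℕ) :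
    (Submodule.span ℝ (setC d) : Set ((Fin d → ℝ) → Matrix (Fin d) (Fin d) ℝ)) = setC d ∧
    Module.finrank ℝ (Submodule.span ℝ (setC d)) =
      2 * d.choose 4 + 3 * d.choose 3 + d.choose 2 ∧
    2 * d.choose 4 + 3 * d.choose 3 + d.choose 2 = d ^ 2 * (d ^ 2 - 1) / 12 := by
  have hinj : Function.Injective (evalMatrix 2 ∘ₗ (symmetricSubmodule (Fin d) ℝ
      (homogeneousSubmodule (Fin d) ℝ 2)).subtype) :=
    evalMatrix_injective.comp Subtype.val_injective
  refine ⟨by rw [setC_eq_map_ker, Submodule.span_eq], ?_, choose_sum_eq_sq_mul_sq_sub_one_div d⟩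
  rw [setC_eq_map_ker, Submodule.span_eq, ← (Submodule.equivMapOfInjective _ hinj _).finrank_eq]
  have rank_nullity := finrank_ker_mulVecX_add (σ := Fin d) (K := ℝ) 1
  simp only [Fintype.card_fin, add_assoc, Nat.reduceAdd] at rank_nullity
  have := choose_sum_add_mul_choose_three d
  omega

/-- `C` is a real linear space (it coincides with its linear span) and its
dimension equals `2 * C(d,4) + 3 * C(d,3) + C(d,2) = d²(d²-1)/12`. -/
theorem stmt3 (d : ℕ) (hd : 1 ≤ d) :
    (Submodule.span ℝ (setC d) : Set ((Fin d → ℝ) → Matrix (Fin d) (Fin d) ℝ)) = setC d ∧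
    Module.finrank ℝ (Submodule.span ℝ (setC d)) =
      2 * d.choose 4 + 3 * d.choose 3 + d.choose 2 ∧
    2 * d.choose 4 + 3 * d.choose 3 + d.choose 2 = d ^ 2 * (d ^ 2 - 1) / 12 :=
  stmt3_general d
end

section
/- Let d ≥ 1 and m = binomial(d,2). The linear space K = { H ∈ S^m : c_H(x) = 0 for all x ∈ ℝ^d } has dimension binomial(d,4) (with the convention binomial(d,4) = 0 for d < 4). -/
open Matrix

/-- The index set of pairs `(i,j)` with `i < j`; it has cardinality `d.choose 2`
and corresponds to the lexicographic enumeration `D_1, …, D_m` used in the paper. -/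
abbrev PairIdx (d : ℕ) := {p : Fin d × Fin d // p.1 < p.2}

/-- The elementary skew-symmetric matrix `S_{ij} = e_i e_jᵀ - e_j e_iᵀ`. -/
noncomputable def skewBasis {d : ℕ} (p : PairIdx d) : Matrix (Fin d) (Fin d) ℝ :=
  Matrix.single p.1.1 p.1.2 1 - Matrix.single p.1.2 p.1.1 1

/-- `c_H(x) = ∑_{p,q} h_{pq} D_p x xᵀ D_qᵀ`. -/
noncomputable def cH {d : ℕ} (H : Matrix (PairIdx d) (PairIdx d) ℝ) (x : Fin d → ℝ) :
    Matrix (Fin d) (Fin d) ℝ :=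
  ∑ p : PairIdx d, ∑ q : PairIdx d,
    H p q • (skewBasis p * Matrix.vecMulVec x x * (skewBasis q)ᵀ)

/-!
If `c_H ≡ 0`, the 4-linear form `M_H(x₀, x₁, x₂, x₃) = ∑ h_pq (x₀ᵀ D_p x₁) (x₂ᵀ D_q x₃)` is
alternating: it is skew in `(x₀, x₁)` and in `(x₂, x₃)` because the `D_p` are skew, and it
vanishes when `x₁ = x₃` because `M_H(a, y, b, y) = aᵀ c_H(y) b`; these transpositions generate
`S₄`. Conversely an alternating 4-form `ω` defines the symmetric matrix
`h_pq = ω(e_i, e_j, e_k, e_l)` (`p = (i, j)`, `q = (k, l)`), and the form `M` of that matrix is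
`ω` again, so its `c` vanishes. Hence `K` is isomorphic to the space of alternating 4-forms on
`ℝ^d`, which is dual to `⋀⁴ ℝ^d` and has dimension `binomial(d, 4)`.
-/

theorem finrank_alternatingMap {K V : Type*} [Field K] [AddCommGroup V] [Module K V]
    [FiniteDimensional K V] (n : ℕ) :
    Module.finrank K (V [⋀^Fin n]→ₗ[K] K) = (Module.finrank K V).choose n := by
  rw [exteriorPower.alternatingMapLinearEquiv.finrank_eq, Subspace.dual_finrank_eq,
    exteriorPower.finrank_eq]

section AlternatingFin4

variable {R M N : Type*} [CommRing R] [AddCommGroup M] [Module R M] [AddCommGroup N] [Module R N]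
  (f : M [⋀^Fin 4]→ₗ[R] N) (a b c e : M)

theorem AlternatingMap.map_fin4_swap_01 : f ![b, a, c, e] = -f ![a, b, c, e] := by
  rw [← f.map_swap _ (show (0 : Fin 4) ≠ 1 by decide)]
  congr; ext k; fin_cases k <;> rfl

theorem AlternatingMap.map_fin4_swap_23 : f ![a, b, e, c] = -f ![a, b, c, e] := by
  rw [← f.map_swap _ (show (2 : Fin 4) ≠ 3 by decide)]
  congr; ext k; fin_cases k <;> rfl

theorem AlternatingMap.map_fin4_swap_pairs : f ![c, e, a, b] = f ![a, b, c, e] := by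
  have h := f.map_perm ![a, b, c, e] (Equiv.swap 0 2 * Equiv.swap 1 3)
  rw [show Equiv.Perm.sign (Equiv.swap (0 : Fin 4) 2 * Equiv.swap 1 3) = 1 by decide,
    one_smul] at h
  rw [← h]
  congr; ext k; fin_cases k <;> rfl

end AlternatingFin4

section SkewBasis

variable {d : ℕ}

theorem skewBasis_transpose (p : PairIdx d) : (skewBasis p)ᵀ = -skewBasis p := by
  simp [skewBasis, transpose_sub, transpose_single]

theorem skewBasis_apply (p : PairIdx d) (i j : Fin d) :
    skewBasis p i j = (if p.1 = (i, j) then 1 else 0) - (if p.1 = (j, i) then 1 else 0) := by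
  simp [skewBasis, single_apply, Prod.ext_iff, and_comm]

theorem skewBasis_apply_pair (p q : PairIdx d) :
    skewBasis p q.1.1 q.1.2 = if p = q then 1 else 0 := by
  have : p.1 ≠ (q.1.2, q.1.1) := fun h => lt_asymm q.2 (by simpa [h] using p.2)
  simp [skewBasis_apply, this, Subtype.ext_iff]

theorem sum_pairIdx_ite_eq (f : Fin d → Fin d → ℝ) (i j : Fin d) :
    ∑ p : PairIdx d, (if p.1 = (i, j) then f p.1.1 p.1.2 else 0) = if i < j then f i j else 0 := by
  split_ifs with h
  · rw [Finset.sum_eq_single ⟨(i, j), h⟩ (fun p _ hp => if_neg fun hp' => hp (Subtype.ext hp'))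
      (by simp)]
    simp
  · refine Finset.sum_eq_zero fun p _ => if_neg fun hp => h ?_
    simpa [hp] using p.2

theorem sum_skewBasis_apply_mul (g : Fin d → Fin d → ℝ) (hg : ∀ a b, g b a = -g a b)
    (i j : Fin d) : ∑ p : PairIdx d, skewBasis p i j * g p.1.1 p.1.2 = g i j := by
  simp only [skewBasis_apply, sub_mul, ite_mul, one_mul, zero_mul, Finset.sum_sub_distrib,
    sum_pairIdx_ite_eq]
  rcases lt_trichotomy i j with h | rfl | h
  · simp [h, h.not_gt]
  · simp only [lt_self_iff_false, ↓reduceIte, sub_self]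
    linarith [hg i i]
  · simp [h, h.not_gt, hg j i]

theorem dotProduct_skewBasis_mulVec_comm (p : PairIdx d) (x y : Fin d → ℝ) :
    y ⬝ᵥ skewBasis p *ᵥ x = -(x ⬝ᵥ skewBasis p *ᵥ y) := by
  rw [dotProduct_mulVec, ← mulVec_transpose, skewBasis_transpose, neg_mulVec, neg_dotProduct,
    dotProduct_comm]

theorem dotProduct_skewBasis_mul_vecMulVec_mul_mulVec (p q : PairIdx d) (a b y : Fin d → ℝ) :
    a ⬝ᵥ (skewBasis p * vecMulVec y y * (skewBasis q)ᵀ) *ᵥ b =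
      (a ⬝ᵥ skewBasis p *ᵥ y) * (b ⬝ᵥ skewBasis q *ᵥ y) := by
  rw [mul_vecMulVec, vecMulVec_mul, vecMul_transpose, dotProduct_mulVec, vecMul_vecMulVec,
    smul_dotProduct, smul_eq_mul, dotProduct_comm (_ *ᵥ y)]

end SkewBasis

section FormOfH

variable {d : ℕ}

noncomputable def cHMultilinear (H : Matrix (PairIdx d) (PairIdx d) ℝ) :
    MultilinearMap ℝ (fun _ : Fin 4 => Fin d → ℝ) ℝ :=
  MultilinearMap.mk'
    (fun v => ∑ p, ∑ q, H p q * (v 0 ⬝ᵥ skewBasis p *ᵥ v 1) * (v 2 ⬝ᵥ skewBasis q *ᵥ v 3))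
    (fun v i x y => by
      fin_cases i <;>
        simp [add_dotProduct, dotProduct_add, mulVec_add, mul_add, add_mul,
          Finset.sum_add_distrib])
    (fun v i c x => by
      fin_cases i <;>
        simp [smul_dotProduct, dotProduct_smul, mulVec_smul, Finset.mul_sum, mul_left_comm,
          mul_assoc])

theorem cHMultilinear_apply (H : Matrix (PairIdx d) (PairIdx d) ℝ) (v : Fin 4 → Fin d → ℝ) :
    cHMultilinear H v =
      ∑ p, ∑ q, H p q * (v 0 ⬝ᵥ skewBasis p *ᵥ v 1) * (v 2 ⬝ᵥ skewBasis q *ᵥ v 3) := rfl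

theorem dotProduct_cH_mulVec (H : Matrix (PairIdx d) (PairIdx d) ℝ) (a b y : Fin d → ℝ) :
    a ⬝ᵥ cH H y *ᵥ b = cHMultilinear H ![a, y, b, y] := by
  simp only [cH, cHMultilinear_apply, sum_mulVec, smul_mulVec, dotProduct_sum, dotProduct_smul,
    smul_eq_mul, dotProduct_skewBasis_mul_vecMulVec_mul_mulVec]
  simp [mul_assoc]

theorem cHMultilinear_swap_01 (H : Matrix (PairIdx d) (PairIdx d) ℝ) (a b c e : Fin d → ℝ) :
    cHMultilinear H ![b, a, c, e] = -cHMultilinear H ![a, b, c, e] := by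
  simp [cHMultilinear_apply, dotProduct_skewBasis_mulVec_comm _ a b]

theorem cHMultilinear_swap_23 (H : Matrix (PairIdx d) (PairIdx d) ℝ) (a b c e : Fin d → ℝ) :
    cHMultilinear H ![a, b, e, c] = -cHMultilinear H ![a, b, c, e] := by
  simp [cHMultilinear_apply, dotProduct_skewBasis_mulVec_comm _ c e]

theorem cHMultilinear_eq_zero_of_cH_eq_zero {H : Matrix (PairIdx d) (PairIdx d) ℝ}
    (hH : ∀ x, cH H x = 0) (a b y : Fin d → ℝ) : cHMultilinear H ![a, y, b, y] = 0 := by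
  rw [← dotProduct_cH_mulVec, hH, zero_mulVec, dotProduct_zero]

noncomputable def cHAlternating (H : Matrix (PairIdx d) (PairIdx d) ℝ)
    (hH : ∀ x, cH H x = 0) : (Fin d → ℝ) [⋀^Fin 4]→ₗ[ℝ] ℝ where
  __ := cHMultilinear H
  map_eq_zero_of_eq' v i j hv hij := by
    have h01 (y c e) : cHMultilinear H ![y, y, c, e] = 0 :=
      self_eq_neg.mp (cHMultilinear_swap_01 H y y c e)
    have h23 (a b y) : cHMultilinear H ![a, b, y, y] = 0 :=
      self_eq_neg.mp (cHMultilinear_swap_23 H a b y y)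
    have h13 := cHMultilinear_eq_zero_of_cH_eq_zero hH
    have h02 (a b y) : cHMultilinear H ![y, a, y, b] = 0 := by
      rw [cHMultilinear_swap_01, cHMultilinear_swap_23, neg_neg, h13]
    have h03 (a b y) : cHMultilinear H ![y, a, b, y] = 0 := by
      rw [cHMultilinear_swap_01, h13, neg_zero]
    have h12 (a b y) : cHMultilinear H ![a, y, y, b] = 0 := by
      rw [cHMultilinear_swap_23, h13, neg_zero]
    change cHMultilinear H v = 0
    rw [show v = ![v 0, v 1, v 2, v 3] by ext k; fin_cases k <;> rfl]
    fin_cases i <;> fin_cases j <;> simp at hv hij <;> rw [hv] <;>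
      simp only [h01, h23, h13, h02, h03, h12]

end FormOfH

section MatrixOfForm

variable {d : ℕ}

noncomputable def toPairMatrix :
    ((Fin d → ℝ) [⋀^Fin 4]→ₗ[ℝ] ℝ) →ₗ[ℝ] Matrix (PairIdx d) (PairIdx d) ℝ where
  toFun ω p q := ω ![Pi.single p.1.1 1, Pi.single p.1.2 1, Pi.single q.1.1 1, Pi.single q.1.2 1]
  map_add' _ _ := rfl
  map_smul' _ _ := rfl

theorem toPairMatrix_apply (ω : (Fin d → ℝ) [⋀^Fin 4]→ₗ[ℝ] ℝ) (p q : PairIdx d) :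
    toPairMatrix ω p q =
      ω ![Pi.single p.1.1 1, Pi.single p.1.2 1, Pi.single q.1.1 1, Pi.single q.1.2 1] := rfl

theorem toPairMatrix_cHAlternating (H : Matrix (PairIdx d) (PairIdx d) ℝ)
    (hH : ∀ x, cH H x = 0) : toPairMatrix (cHAlternating H hH) = H := by
  ext p q
  change cHMultilinear H _ = H p q
  simp [cHMultilinear_apply, skewBasis_apply_pair]

theorem toPairMatrix_isSymm (ω : (Fin d → ℝ) [⋀^Fin 4]→ₗ[ℝ] ℝ) : (toPairMatrix ω).IsSymm :=
  IsSymm.ext fun _ _ => ω.map_fin4_swap_pairs _ _ _ _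

theorem cHMultilinear_toPairMatrix (ω : (Fin d → ℝ) [⋀^Fin 4]→ₗ[ℝ] ℝ) :
    cHMultilinear (toPairMatrix ω) = ω.toMultilinearMap := by
  refine Module.Basis.ext_multilinear (fun _ => Pi.basisFun ℝ (Fin d)) fun v => ?_
  let e i : Fin d → ℝ := Pi.single i 1
  have sum_inner (i j : Fin d) :
      ∑ q : PairIdx d, skewBasis q (v 2) (v 3) * ω ![e i, e j, e q.1.1, e q.1.2] =
        ω ![e i, e j, e (v 2), e (v 3)] :=
    sum_skewBasis_apply_mul (fun k l => ω ![e i, e j, e k, e l])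
      (fun _ _ => ω.map_fin4_swap_23 _ _ _ _) _ _
  have sum_outer :
      ∑ p : PairIdx d, skewBasis p (v 0) (v 1) * ω ![e p.1.1, e p.1.2, e (v 2), e (v 3)] =
        ω ![e (v 0), e (v 1), e (v 2), e (v 3)] :=
    sum_skewBasis_apply_mul (fun k l => ω ![e k, e l, e (v 2), e (v 3)])
      (fun _ _ => ω.map_fin4_swap_01 _ _ _ _) _ _
  calc cHMultilinear (toPairMatrix ω) (fun i => Pi.basisFun ℝ (Fin d) (v i))
      = ∑ p : PairIdx d, skewBasis p (v 0) (v 1) *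
          ∑ q : PairIdx d, skewBasis q (v 2) (v 3) * ω ![e p.1.1, e p.1.2, e q.1.1, e q.1.2] := by
        simp only [cHMultilinear_apply, Finset.mul_sum]
        refine Finset.sum_congr rfl fun p _ => Finset.sum_congr rfl fun q _ => ?_
        simp only [toPairMatrix_apply, Pi.basisFun_apply, mulVec_single_one,
          single_one_dotProduct, col_apply]
        ring
    _ = ω ![e (v 0), e (v 1), e (v 2), e (v 3)] := by simp only [sum_inner, sum_outer]
    _ = ω (fun i => Pi.basisFun ℝ (Fin d) (v i)) := by
        congr 1; ext k : 1; fin_cases k <;> simp [e]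

theorem cH_toPairMatrix (ω : (Fin d → ℝ) [⋀^Fin 4]→ₗ[ℝ] ℝ) (x : Fin d → ℝ) :
    cH (toPairMatrix ω) x = 0 := by
  ext a b
  have h := dotProduct_cH_mulVec (toPairMatrix ω) (Pi.single a 1) (Pi.single b 1) x
  rw [cHMultilinear_toPairMatrix, AlternatingMap.coe_multilinearMap,
    ω.map_eq_zero_of_eq _ (show ![_, x, _, x] 1 = ![_, x, _, x] 3 from rfl) (by decide)] at h
  simpa [mulVec_single_one] using h

theorem toPairMatrix_injective : Function.Injective (toPairMatrix (d := d)) :=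
  fun ω ω' h => AlternatingMap.coe_multilinearMap_injective <| by
    rw [← cHMultilinear_toPairMatrix, h, cHMultilinear_toPairMatrix]

theorem setOf_cH_eq_zero_eq_range_toPairMatrix :
    {H : Matrix (PairIdx d) (PairIdx d) ℝ | H.IsSymm ∧ ∀ x, cH H x = 0} =
      LinearMap.range (toPairMatrix (d := d)) := by
  ext H
  constructor
  · rintro ⟨-, hH⟩
    exact ⟨cHAlternating H hH, toPairMatrix_cHAlternating H hH⟩
  · rintro ⟨ω, rfl⟩
    exact ⟨toPairMatrix_isSymm ω, cH_toPairMatrix ω⟩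

end MatrixOfForm

theorem stmt4_general (d : ℕ) :
    Module.finrank ℝ (Submodule.span ℝ
      {H : Matrix (PairIdx d) (PairIdx d) ℝ | H.IsSymm ∧ ∀ x, cH H x = 0}) =
      d.choose 4 := by
  rw [setOf_cH_eq_zero_eq_range_toPairMatrix, Submodule.span_eq,
    LinearMap.finrank_range_of_inj toPairMatrix_injective, finrank_alternatingMap,
    Module.finrank_fin_fun]

/-- The linear space `K = { H ∈ S^m : c_H ≡ 0 }`, with `m = choose d 2`,
has dimension `choose d 4`. (Since `K` is a linear subspace, we express it as the linear
span of the corresponding set.) -/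
theorem stmt4 (d : ℕ) (hd : 1 ≤ d) :
    Module.finrank ℝ (Submodule.span ℝ
      {H : Matrix (PairIdx d) (PairIdx d) ℝ | H.IsSymm ∧ ∀ x, cH H x = 0}) =
      d.choose 4 :=
  stmt4_general d
end

section
/- Let d ≥ 1. Let D be the space of maps c : ℝ^d → S^d whose entries are homogeneous polynomials of degree 2, and let E be the space of maps f : ℝ^d → ℝ^d whose components are homogeneous polynomials of degree 3. Then the linear map T : D → E defined by (T c)(x) = c(x) x is surjective. In particular, for all indices i, j, k, l ∈ {1,…,d} there exists c ∈ D with c(x) x = x_i x_j x_k e_l for all x; one such c is c(x) = x_i ( x_j E_{kl} + x_k E_{jl} − x_l E_{jk} ) / 2, where E_{st} = e_s e_t^⊤ + e_t e_s^⊤. -/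
open Matrix

/-- `E_{st} = e_s e_tᵀ + e_t e_sᵀ`. -/
noncomputable def Emat {d : ℕ} (s t : Fin d) : Matrix (Fin d) (Fin d) ℝ :=
  Matrix.single s t 1 + Matrix.single t s 1

namespace MvPolynomial

variable {σ R : Type*} [CommSemiring R]

theorem exists_monomial_one_eq_X_mul_X_mul_X {m : σ →₀ ℕ} (hm : m.degree = 3) :
    ∃ i j k : σ, (monomial m 1 : MvPolynomial σ R) = X i * X j * X k := by
  classical
  have hcard : Multiset.card (Finsupp.toMultiset m) = 3 := by
    rw [Finsupp.card_toMultiset, ← hm, Finsupp.degree]; rfl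
  obtain ⟨i, j, k, hijk⟩ := Multiset.card_eq_three.mp hcard
  refine ⟨i, j, k, ?_⟩
  rw [← Finsupp.toMultiset_toFinsupp m, hijk]
  simp [X, monomial_mul, ← Multiset.singleton_add, Multiset.toFinsupp_add, add_assoc]

theorem homogeneousSubmodule_three_le_span :
    homogeneousSubmodule σ R 3 ≤
      Submodule.span R (Set.range fun ijk : σ × σ × σ => X ijk.1 * X ijk.2.1 * X ijk.2.2) := by
  rw [homogeneousSubmodule_eq_finsupp_supported, AddMonoidAlgebra.supported_eq_span_single,
    Submodule.span_le]
  rintro _ ⟨m, hm, rfl⟩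
  obtain ⟨i, j, k, hijk⟩ := exists_monomial_one_eq_X_mul_X_mul_X (R := R) hm
  exact Submodule.subset_span ⟨(i, j, k), hijk.symm⟩

end MvPolynomial

open MvPolynomial

variable {d : ℕ}

variable (d) in
noncomputable def homPolyFun (k : ℕ) : Submodule ℝ ((Fin d → ℝ) → ℝ) :=
  (homogeneousSubmodule (Fin d) ℝ k).map (LinearMap.pi fun x => (aeval x).toLinearMap)

theorem mem_homPolyFun_iff {k : ℕ} {f : (Fin d → ℝ) → ℝ} :
    f ∈ homPolyFun d k ↔ IsHomPolyFun d k f := by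
  simp [homPolyFun, IsHomPolyFun, funext_iff, eq_comm]

theorem mul_mem_homPolyFun_two (a b : Fin d) :
    (fun x : Fin d → ℝ => x a * x b) ∈ homPolyFun d 2 :=
  mem_homPolyFun_iff.mpr ⟨X a * X b, (isHomogeneous_X ℝ a).mul (isHomogeneous_X ℝ b), by simp⟩

variable (d) in
/-- The space `D` of the paper. -/
noncomputable def symmQuadFields : Submodule ℝ ((Fin d → ℝ) → Matrix (Fin d) (Fin d) ℝ) where
  carrier := {c | (∀ x, (c x).IsSymm) ∧ ∀ i j, IsHomPolyFun d 2 fun x => c x i j}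
  add_mem' := fun ⟨hc, hcp⟩ ⟨he, hep⟩ =>
    ⟨fun x => (hc x).add (he x), fun i j => mem_homPolyFun_iff.mp <|
      add_mem (mem_homPolyFun_iff.mpr (hcp i j)) (mem_homPolyFun_iff.mpr (hep i j))⟩
  zero_mem' := ⟨fun _ => isSymm_zero, fun _ _ => mem_homPolyFun_iff.mp (zero_mem _)⟩
  smul_mem' a _ := fun ⟨hc, hcp⟩ =>
    ⟨fun x => (hc x).smul a, fun i j => mem_homPolyFun_iff.mp <|
      Submodule.smul_mem _ a (mem_homPolyFun_iff.mpr (hcp i j))⟩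

variable (d) in
/-- The map `T : c ↦ (x ↦ c(x) x)` of the paper. -/
def mulVecSelf :
    ((Fin d → ℝ) → Matrix (Fin d) (Fin d) ℝ) →ₗ[ℝ] ((Fin d → ℝ) → Fin d → ℝ) where
  toFun c x := c x *ᵥ x
  map_add' c e := funext fun x => add_mulVec (c x) (e x) x
  map_smul' a c := funext fun x => smul_mulVec a (c x) x

theorem Emat_isSymm (s t : Fin d) : (Emat s t).IsSymm := by
  simp [Emat, IsSymm, transpose_add, add_comm]

theorem Emat_mulVec (s t : Fin d) (x : Fin d → ℝ) :
    Emat s t *ᵥ x = x t • Pi.single s 1 + x s • Pi.single t 1 := by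
  simp [Emat, add_mulVec, single_mulVec_eq]

noncomputable def cubicWitness (i j k l : Fin d) (x : Fin d → ℝ) : Matrix (Fin d) (Fin d) ℝ :=
  ((1 : ℝ) / 2) • (x i • (x j • Emat k l + x k • Emat j l - x l • Emat j k))

theorem cubicWitness_mulVec (i j k l : Fin d) (x : Fin d → ℝ) :
    cubicWitness i j k l x *ᵥ x = (x i * x j * x k) • (Pi.single l 1 : Fin d → ℝ) := by
  simp only [cubicWitness, smul_mulVec, add_mulVec, sub_mulVec, Emat_mulVec]
  module

theorem cubicWitness_mem_symmQuadFields (i j k l : Fin d) :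
    cubicWitness i j k l ∈ symmQuadFields d := by
  refine ⟨fun x => ?_, fun s t => mem_homPolyFun_iff.mp ?_⟩
  · exact ((((Emat_isSymm k l).smul _).add ((Emat_isSymm j l).smul _)).sub
      ((Emat_isSymm j k).smul _)).smul _ |>.smul _
  · have hentry : (fun x => cubicWitness i j k l x s t) =
        (Emat k l s t / 2) • (fun x => x i * x j) + (Emat j l s t / 2) • (fun x => x i * x k)
          - (Emat j k s t / 2) • (fun x => x i * x l) := by
      funext x
      simp only [cubicWitness, Matrix.smul_apply, Matrix.add_apply, Matrix.sub_apply,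
        smul_eq_mul, Pi.add_apply, Pi.sub_apply, Pi.smul_apply]
      ring
    rw [hentry]
    exact sub_mem (add_mem (Submodule.smul_mem _ _ (mul_mem_homPolyFun_two i j))
      (Submodule.smul_mem _ _ (mul_mem_homPolyFun_two i k)))
      (Submodule.smul_mem _ _ (mul_mem_homPolyFun_two i l))

theorem cubicMonomialField_mem_map (i j k l : Fin d) :
    (fun x => (x i * x j * x k) • (Pi.single l 1 : Fin d → ℝ)) ∈
      (symmQuadFields d).map (mulVecSelf d) :=
  ⟨cubicWitness i j k l, cubicWitness_mem_symmQuadFields i j k l,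
    funext (cubicWitness_mulVec i j k l)⟩

variable (d) in
noncomputable def evalSmulSingle (l : Fin d) :
    MvPolynomial (Fin d) ℝ →ₗ[ℝ] ((Fin d → ℝ) → Fin d → ℝ) :=
  LinearMap.pi fun x => (aeval x).toLinearMap.smulRight (Pi.single l 1)

theorem evalSmulSingle_apply (l : Fin d) (P : MvPolynomial (Fin d) ℝ) :
    evalSmulSingle d l P = fun x => eval x P • (Pi.single l 1 : Fin d → ℝ) := by
  ext
  simp [evalSmulSingle]

theorem eval_smul_single_mem_map {P : MvPolynomial (Fin d) ℝ} (hP : P.IsHomogeneous 3)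
    (l : Fin d) :
    (fun x => eval x P • (Pi.single l 1 : Fin d → ℝ)) ∈ (symmQuadFields d).map (mulVecSelf d) := by
  have hmonomials : Submodule.span ℝ (Set.range fun ijk : Fin d × Fin d × Fin d =>
      X ijk.1 * X ijk.2.1 * X ijk.2.2) ≤
      ((symmQuadFields d).map (mulVecSelf d)).comap (evalSmulSingle d l) := by
    rw [Submodule.span_le]
    rintro _ ⟨⟨i, j, k⟩, rfl⟩
    simpa [evalSmulSingle_apply] using cubicMonomialField_mem_map i j k l
  simpa [evalSmulSingle_apply] using hmonomials (homogeneousSubmodule_three_le_span hP)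

theorem stmt5_general (d : ℕ) :
    -- surjectivity of `T`
    (∀ f : (Fin d → ℝ) → (Fin d → ℝ),
      (∀ i, IsHomPolyFun d 3 (fun x => f x i)) →
      ∃ c : (Fin d → ℝ) → Matrix (Fin d) (Fin d) ℝ,
        (∀ x, (c x).IsSymm) ∧
        (∀ i j, IsHomPolyFun d 2 (fun x => c x i j)) ∧
        (∀ x, (c x).mulVec x = f x)) ∧
    -- the explicit witness
    (∀ i j k l : Fin d, ∀ x : Fin d → ℝ,
      (((1 : ℝ) / 2) • (x i • (x j • Emat k l + x k • Emat j l - x l • Emat j k))).mulVec x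
        = (x i * x j * x k) • (Pi.single l 1 : Fin d → ℝ)) := by
  refine ⟨fun f hf => ?_, cubicWitness_mulVec⟩
  choose P hP hfP using hf
  have hf_sum : f = ∑ l, fun x => eval x (P l) • (Pi.single l 1 : Fin d → ℝ) := by
    ext x r
    simp [← hfP, Pi.single_apply]
  have hf_mem : f ∈ (symmQuadFields d).map (mulVecSelf d) :=
    hf_sum ▸ Submodule.sum_mem _ fun l _ => eval_smul_single_mem_map (hP l) l
  obtain ⟨c, ⟨hc_symm, hc_poly⟩, hc⟩ := hf_mem
  exact ⟨c, hc_symm, hc_poly, congrFun hc⟩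

/-- The linear map `T : D → E`, `(Tc)(x) = c(x) x`, from the space `D` of
maps `ℝ^d → S^d` with homogeneous degree-2 polynomial entries to the space `E` of maps
`ℝ^d → ℝ^d` with homogeneous degree-3 polynomial components, is surjective. In particular,
for all indices `i, j, k, l` the map `c(x) = x_i (x_j E_{kl} + x_k E_{jl} - x_l E_{jk})/2`
lies in `D` and satisfies `c(x) x = x_i x_j x_k e_l`. -/
theorem stmt5 (d : ℕ) (hd : 1 ≤ d) :
    -- surjectivity of `T`
    (∀ f : (Fin d → ℝ) → (Fin d → ℝ),
      (∀ i, IsHomPolyFun d 3 (fun x => f x i)) →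
      ∃ c : (Fin d → ℝ) → Matrix (Fin d) (Fin d) ℝ,
        (∀ x, (c x).IsSymm) ∧
        (∀ i j, IsHomPolyFun d 2 (fun x => c x i j)) ∧
        (∀ x, (c x).mulVec x = f x)) ∧
    -- the explicit witness
    (∀ i j k l : Fin d, ∀ x : Fin d → ℝ,
      (((1 : ℝ) / 2) • (x i • (x j • Emat k l + x k • Emat j l - x l • Emat j k))).mulVec x
        = (x i * x j * x k) • (Pi.single l 1 : Fin d → ℝ)) :=
  stmt5_general d
end

section
/- Let d ≥ 1, m = binomial(d,2), and let c ∈ C. The following three conditions are equivalent: (i) the biquadratic form BQ(x,y) = y^⊤ c(x) y is a sum of squares of real polynomials in the variables (x,y); (ii) c = c_H for some positive semidefinite H ∈ S^m; (iii) c(x) = Σ_{p=1}^m A_p x x^⊤ A_p^⊤ for all x, for some skew-symmetric matrices A_1, …, A_m ∈ ℝ^{d×d}. -/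
open Matrix

/-!
(ii) ⇔ (iii): a positive semidefinite `H` factors as `Bᵀ B`, and then
`c_H(x) = ∑ₖ Aₖ x xᵀ Aₖᵀ` with `Aₖ = ∑_p B_{kp} D_p`; conversely every skew-symmetric matrix is a
combination of the `D_p`. (iii) ⇒ (i) because `yᵀ A x xᵀ Aᵀ y = (yᵀ A x)²`.

(i) ⇒ (iii): `BQ` has degree 2 in `x` and degree 2 in `y`. Grading by the `x`-degree with a new
variable `t`, a representation `∑ₖ fₖ² = q t²` over the formally real ring `ℝ[x, y]` forces each
`fₖ` to be `aₖ t` (compare the constant and the top coefficients), so every `fₖ` has degree 1 in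
`x`, and likewise in `y`: `fₖ = yᵀ Bₖ x`. Then `c(x) x = 0` gives `∑ₖ (xᵀ Bₖ x)² = 0`, so each `Bₖ`
is skew-symmetric, and `c(x)` and `∑ₖ Bₖ x xᵀ Bₖᵀ` are symmetric matrices with the same quadratic
form.
-/

open MvPolynomial

theorem IsFormallyReal.eq_zero_of_sum_sq_eq_zero {R ι : Type*} [CommRing R] [IsFormallyReal R]
    {s : Finset ι} {a : ι → R} (h : ∑ i ∈ s, a i ^ 2 = 0) {i : ι} (hi : i ∈ s) : a i = 0 := by
  classical
  rw [← Finset.add_sum_erase s _ hi] at h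
  exact IsNilpotent.eq_zero
    ⟨2, eq_zero_of_add_right (IsSquare.sq (a i)).isSumSq (IsSumSq.sum_sq _ _) h⟩

theorem IsSumSq.map {R S F : Type*} [CommSemiring R] [CommSemiring S] [FunLike F R S]
    [RingHomClass F R S] (f : F) {s : R} (hs : IsSumSq s) : IsSumSq (f s) := by
  induction hs with
  | zero => simp
  | sq_add a _ ih => simpa using IsSumSq.sq_add (f a) ih

instance MvPolynomial.isFormallyReal {σ R : Type*} [Field R] [LinearOrder R]
    [IsStrictOrderedRing R] : IsFormallyReal (MvPolynomial σ R) :=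
  .of_eq_zero_of_mul_self_of_eq_zero_of_add mul_self_eq_zero.mp fun hs₁ hs₂ h =>
    MvPolynomial.funext fun x => by
      have hx := congrArg (eval x) h
      rw [map_add, map_zero] at hx
      have h₁ := (hs₁.map (eval x)).nonneg
      have h₂ := (hs₂.map (eval x)).nonneg
      rw [map_zero]
      linarith

namespace Polynomial

variable {R ι : Type*} [CommRing R] [IsFormallyReal R]

theorem natDegree_le_of_natDegree_sum_sq_le {s : Finset ι} {g : ι → R[X]} {n : ℕ}
    (h : (∑ i ∈ s, g i ^ 2).natDegree ≤ 2 * n) {i : ι} (hi : i ∈ s) : (g i).natDegree ≤ n := by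
  set M := s.sup fun i => (g i).natDegree
  have hle : ∀ i ∈ s, (g i).natDegree ≤ M := fun i hi =>
    Finset.le_sup (f := fun i => (g i).natDegree) hi
  suffices M ≤ n from (hle i hi).trans this
  by_contra! hnM
  have hcoeff : ∀ i ∈ s, (g i).coeff M = 0 := by
    refine fun i hi => IsFormallyReal.eq_zero_of_sum_sq_eq_zero (a := fun i => (g i).coeff M) ?_ hi
    rw [← Finset.sum_congr rfl fun i hi => coeff_pow_of_natDegree_le (hle i hi), ← finsetSum_coeff]
    exact coeff_eq_zero_of_natDegree_lt (by omega)
  obtain ⟨j, hj, hjM⟩ := Finset.exists_mem_eq_sup s ⟨i, hi⟩ fun i => (g i).natDegree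
  have hne : g j ≠ 0 := by
    rintro hj0
    rw [hj0, natDegree_zero] at hjM
    omega
  exact leadingCoeff_ne_zero.mpr hne (by rw [leadingCoeff, ← hjM]; exact hcoeff j hj)

theorem eq_C_mul_X_of_sum_sq_eq_C_mul_X_sq {s : Finset ι} {g : ι → R[X]} {q : R}
    (h : ∑ i ∈ s, g i ^ 2 = C q * X ^ 2) {i : ι} (hi : i ∈ s) : g i = C ((g i).coeff 1) * X := by
  have hdeg : (g i).natDegree ≤ 1 :=
    natDegree_le_of_natDegree_sum_sq_le (h ▸ natDegree_C_mul_X_pow_le q 2) hi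
  have hcoeff : (g i).coeff 0 = 0 := by
    refine IsFormallyReal.eq_zero_of_sum_sq_eq_zero (a := fun i => (g i).coeff 0) ?_ hi
    simpa [sq, mul_coeff_zero] using congrArg (coeff · 0) h
  have hlin := eq_X_add_C_of_natDegree_le_one hdeg
  rwa [hcoeff, C_0, add_zero] at hlin

end Polynomial

namespace MvPolynomial

section WeightedGrading

variable {σ R : Type*} [CommSemiring R]

/-- `f ↦ ∑ₙ fₙ tⁿ`, where `fₙ` is the weighted homogeneous component of degree `n` of `f`. -/
noncomputable def weightedGrading (w : σ → ℕ) :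
    MvPolynomial σ R →+* Polynomial (MvPolynomial σ R) :=
  eval₂Hom (Polynomial.C.comp C) fun s => Polynomial.C (X s) * Polynomial.X ^ w s

theorem weightedGrading_monomial (w : σ → ℕ) (d : σ →₀ ℕ) (a : R) :
    weightedGrading w (monomial d a) =
      Polynomial.C (monomial d a) * Polynomial.X ^ d.weight w := by
  rw [weightedGrading, eval₂Hom_monomial]
  simp only [Finsupp.prod, mul_pow, Finset.prod_mul_distrib, ← pow_mul,
    Finset.prod_pow_eq_pow_sum, ← map_pow, ← map_prod]
  rw [monomial_eq, Finsupp.weight_apply, Finsupp.sum, RingHom.comp_apply, ← mul_assoc,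
    ← Polynomial.C_mul]
  simp only [smul_eq_mul, Finsupp.prod, mul_comm]

theorem coeff_weightedGrading [DecidableEq σ] (w : σ → ℕ) (f : MvPolynomial σ R) (n : ℕ) :
    (weightedGrading w f).coeff n = weightedHomogeneousComponent w n f := by
  induction f using MvPolynomial.induction_on' with
  | monomial d a =>
    ext e
    rw [weightedGrading_monomial, Polynomial.coeff_C_mul_X_pow,
      coeff_weightedHomogeneousComponent]
    by_cases hde : d = e
    · subst hde
      split_ifs <;> simp_all [eq_comm]
    · split_ifs <;> simp [coeff_monomial, hde]
  | add p q hp hq => simp only [map_add, Polynomial.coeff_add, hp, hq]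

theorem weightedGrading_of_isWeightedHomogeneous {w : σ → ℕ} {f : MvPolynomial σ R} {n : ℕ}
    (hf : f.IsWeightedHomogeneous w n) :
    weightedGrading w f = Polynomial.C f * Polynomial.X ^ n := by
  classical
  ext1 m
  rw [coeff_weightedGrading, Polynomial.coeff_C_mul_X_pow]
  split_ifs with h
  · exact h ▸ hf.weightedHomogeneousComponent_same
  · exact hf.weightedHomogeneousComponent_ne m h

theorem IsWeightedHomogeneous.rename {τ : Type*} {w : τ → ℕ} {e : σ → τ} {f : MvPolynomial σ R}
    {n : ℕ} (hf : f.IsWeightedHomogeneous (w ∘ e) n) : (rename e f).IsWeightedHomogeneous w n := by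
  classical
  intro d hd
  obtain ⟨u, rfl, hu⟩ := coeff_rename_ne_zero _ _ _ hd
  rw [Finsupp.weight_apply, Finsupp.sum_mapDomain_index (by simp) (by simp [add_mul])]
  exact hf hu

end WeightedGrading

theorem IsWeightedHomogeneous.of_sum_sq {σ R ι : Type*} [CommRing R]
    [IsFormallyReal (MvPolynomial σ R)] {w : σ → ℕ} {s : Finset ι} {f : ι → MvPolynomial σ R}
    (hf : (∑ i ∈ s, f i ^ 2).IsWeightedHomogeneous w 2) {i : ι} (hi : i ∈ s) :
    (f i).IsWeightedHomogeneous w 1 := by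
  classical
  have hsum : ∑ j ∈ s, weightedGrading w (f j) ^ 2 =
      Polynomial.C (∑ j ∈ s, f j ^ 2) * Polynomial.X ^ 2 := by
    rw [← weightedGrading_of_isWeightedHomogeneous hf, map_sum]
    simp only [map_pow]
  have hfi := Polynomial.eq_C_mul_X_of_sum_sq_eq_C_mul_X_sq hsum hi
  intro d hd
  by_contra hw
  have hcoeff := congrArg (fun p => coeff d (p.coeff (d.weight w))) hfi
  simp only [coeff_weightedGrading, coeff_weightedHomogeneousComponent, Polynomial.coeff_C_mul,
    Polynomial.coeff_X, if_neg (Ne.symm hw), mul_zero, coeff_zero] at hcoeff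
  exact hd hcoeff

section Bihomogeneous

variable {σ τ R : Type*} [CommSemiring R]

abbrev inlWeight : σ ⊕ τ → ℕ := Sum.elim (fun _ => 1) (fun _ => 0)

abbrev inrWeight : σ ⊕ τ → ℕ := Sum.elim (fun _ => 0) (fun _ => 1)

theorem eq_C_coeff_zero_of_isWeightedHomogeneous_zero {f : MvPolynomial (σ ⊕ τ) R}
    (hx : f.IsWeightedHomogeneous inlWeight 0) (hy : f.IsWeightedHomogeneous inrWeight 0) :
    f = C (coeff 0 f) := by
  classical
  ext d
  rw [coeff_C]
  split_ifs with hd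
  · rw [hd]
  by_contra hf
  refine hd (Finsupp.ext fun s => (Nat.eq_zero_of_le_zero ?_).symm)
  rcases s with j | i
  · exact hx hf ▸ Finsupp.le_weight _ (by simp) d
  · exact hy hf ▸ Finsupp.le_weight _ (by simp) d

variable [Fintype σ] [Fintype τ] {f : MvPolynomial (σ ⊕ τ) R}

theorem eq_sum_X_inl_mul_pderiv (hf : f.IsWeightedHomogeneous inlWeight 1) :
    f = ∑ j, X (Sum.inl j) * pderiv (Sum.inl j) f := by
  simpa [Fintype.sum_sum_type] using hf.sum_weight_X_mul_pderiv.symm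

theorem eq_sum_X_inr_mul_pderiv (hf : f.IsWeightedHomogeneous inrWeight 1) :
    f = ∑ i, X (Sum.inr i) * pderiv (Sum.inr i) f := by
  simpa [Fintype.sum_sum_type] using hf.sum_weight_X_mul_pderiv.symm

theorem exists_eval_sumElim_eq_dotProduct_mulVec (hx : f.IsWeightedHomogeneous inlWeight 1)
    (hy : f.IsWeightedHomogeneous inrWeight 1) :
    ∃ B : Matrix τ σ R, ∀ x y, eval (Sum.elim x y) f = y ⬝ᵥ B *ᵥ x := by
  -- Euler's identity, first in `x` and then in `y`; the second derivatives `∂²f/∂yᵢ∂xⱼ` are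
  -- constants.
  set B : Matrix τ σ R := .of fun i j => coeff 0 (pderiv (Sum.inr i) (pderiv (Sum.inl j) f))
  have hpderiv : ∀ j, pderiv (Sum.inl j) f = ∑ i, X (Sum.inr i) * C (B i j) := fun j => by
    have hgx := hx.pderiv (i := Sum.inl j) (n' := 0) (by simp)
    have hgy := hy.pderiv (i := Sum.inl j) (n' := 1) (by simp)
    refine (eq_sum_X_inr_mul_pderiv hgy).trans (Finset.sum_congr rfl fun i _ => ?_)
    rw [eq_C_coeff_zero_of_isWeightedHomogeneous_zero (hgx.pderiv (by simp))
      (hgy.pderiv (by simp))]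
    rfl
  refine ⟨B, fun x y => ?_⟩
  rw [eq_sum_X_inl_mul_pderiv hx]
  simp only [hpderiv, map_sum, map_mul, eval_X, eval_C, Sum.elim_inl, Sum.elim_inr, dotProduct,
    mulVec, Finset.mul_sum, Finset.sum_comm (γ := σ)]
  exact Finset.sum_congr rfl fun i _ => Finset.sum_congr rfl fun j _ => by ring

noncomputable def bilinPoly (B : Matrix τ σ R) : MvPolynomial (σ ⊕ τ) R :=
  ∑ i, ∑ j, C (B i j) * X (Sum.inr i) * X (Sum.inl j)

theorem eval_bilinPoly (B : Matrix τ σ R) (x : σ → R) (y : τ → R) :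
    eval (Sum.elim x y) (bilinPoly B) = y ⬝ᵥ B *ᵥ x := by
  simp only [bilinPoly, map_sum, map_mul, eval_C, eval_X, Sum.elim_inl, Sum.elim_inr, dotProduct,
    mulVec, Finset.mul_sum]
  exact Finset.sum_congr rfl fun i _ => Finset.sum_congr rfl fun j _ => by ring

end Bihomogeneous

end MvPolynomial

namespace Matrix

open scoped ComplexOrder in
theorem PosSemidef.exists_eq_conjTranspose_mul_self {n 𝕜 : Type*} [Fintype n] [DecidableEq n]
    [RCLike 𝕜] {H : Matrix n n 𝕜} (hH : H.PosSemidef) : ∃ B : Matrix n n 𝕜, H = Bᴴ * B := by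
  open scoped MatrixOrder Matrix.Norms.L2Operator in
  exact CStarAlgebra.nonneg_iff_eq_star_mul_self.mp hH.nonneg

theorem posSemidef_iff_isSymm_and_nonneg {n : Type*} [Fintype n] {H : Matrix n n ℝ} :
    H.PosSemidef ↔ H.IsSymm ∧ ∀ u, 0 ≤ u ⬝ᵥ H *ᵥ u := by
  simp [posSemidef_iff_dotProduct_mulVec, IsHermitian, IsSymm]

section QuadraticForm

variable {n R : Type*} [Fintype n] [DecidableEq n] [CommRing R]

theorem transpose_eq_neg_of_dotProduct_mulVec_self_eq_zero {A : Matrix n n R}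
    (h : ∀ x, x ⬝ᵥ A *ᵥ x = 0) : Aᵀ = -A := by
  ext i j
  have hi : A i i = 0 := by simpa using h (Pi.single i 1)
  have hj : A j j = 0 := by simpa using h (Pi.single j 1)
  have hij : A i i + A j i + (A i j + A j j) = 0 := by
    have hsum := h (Pi.single i 1 + Pi.single j 1)
    simp only [mulVec_add, add_dotProduct, dotProduct_add] at hsum
    simpa using hsum
  rw [transpose_apply, neg_apply]
  linear_combination hij - hi - hj

theorem IsSymm.eq_of_dotProduct_mulVec_self_eq [NoZeroDivisors R] [CharZero R]
    {A B : Matrix n n R} (hA : A.IsSymm) (hB : B.IsSymm) (h : ∀ x, x ⬝ᵥ A *ᵥ x = x ⬝ᵥ B *ᵥ x) :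
    A = B := by
  have hskew := transpose_eq_neg_of_dotProduct_mulVec_self_eq_zero (A := A - B) fun x => by
    rw [sub_mulVec, dotProduct_sub, h, sub_self]
  rw [(hA.sub hB).eq] at hskew
  ext i j
  exact sub_eq_zero.mp (self_eq_neg.mp (congrFun₂ hskew i j))

end QuadraticForm

section Congruence

variable {m n R : Type*} [Fintype n] [CommRing R]

theorem isSymm_mul_vecMulVec_mul_transpose (A : Matrix m n R) (x : n → R) :
    (A * vecMulVec x x * Aᵀ).IsSymm := by
  simp [IsSymm, transpose_mul, transpose_vecMulVec, Matrix.mul_assoc]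

variable [Fintype m]

theorem dotProduct_mulVec_mul_vecMulVec_mul_transpose (A : Matrix m n R) (x : n → R)
    (y : m → R) : y ⬝ᵥ (A * vecMulVec x x * Aᵀ) *ᵥ y = (y ⬝ᵥ A *ᵥ x) ^ 2 := by
  rw [← mulVec_mulVec, ← mulVec_mulVec, vecMulVec_mulVec, op_smul_eq_smul, mulVec_smul,
    dotProduct_smul, smul_eq_mul, dotProduct_mulVec, vecMul_transpose, dotProduct_comm, sq]

theorem sum_mul_mul_transpose_sum_smul {ι κ : Type*} [Fintype ι] [Fintype κ]
    (V : Matrix ι κ R) (D : κ → Matrix m m R) (X : Matrix m m R) :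
    ∑ k, (∑ p, V k p • D p) * X * (∑ p, V k p • D p)ᵀ =
      ∑ p, ∑ q, (Vᵀ * V) p q • (D p * X * (D q)ᵀ) := by
  simp only [transpose_sum, transpose_smul, Finset.sum_mul, Finset.mul_sum, smul_mul_assoc,
    mul_smul_comm, Finset.smul_sum, smul_smul, mul_apply, transpose_apply, Finset.sum_smul]
  conv_rhs => rw [Finset.sum_comm]
  rw [Finset.sum_comm]
  refine Finset.sum_congr rfl fun q _ => ?_
  rw [Finset.sum_comm]
  simp only [mul_comm]

end Congruence

end Matrix

section SkewBasis

variable {d : ℕ}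

theorem transpose_sum_smul_skewBasis (v : PairIdx d → ℝ) :
    (∑ p, v p • skewBasis p)ᵀ = -∑ p, v p • skewBasis p := by
  rw [transpose_sum, ← Finset.sum_neg_distrib]
  refine Finset.sum_congr rfl fun p _ => ?_
  rw [transpose_smul, ← smul_neg, skewBasis, transpose_sub, transpose_single, transpose_single,
    neg_sub]

theorem sum_smul_skewBasis_apply (v : PairIdx d → ℝ) (i j : Fin d) :
    (∑ p, v p • skewBasis p) i j =
      (if h : i < j then v ⟨(i, j), h⟩ else 0) - if h : j < i then v ⟨(j, i), h⟩ else 0 := by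
  have hsum : ∀ a b : Fin d, (∑ p : PairIdx d, if p.1.1 = a ∧ p.1.2 = b then v p else 0) =
      if h : a < b then v ⟨(a, b), h⟩ else 0 := fun a b => by
    split_ifs with h
    · refine (Finset.sum_eq_single ⟨(a, b), h⟩ (fun p _ hp => if_neg ?_) (by simp)).trans (by simp)
      rintro ⟨ha, hb⟩
      exact hp (Subtype.ext (Prod.ext ha hb))
    · refine Finset.sum_eq_zero fun p _ => if_neg ?_
      rintro ⟨rfl, rfl⟩
      exact h p.2
  simp only [skewBasis, Matrix.sum_apply, Matrix.smul_apply, Matrix.sub_apply, single_apply,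
    smul_eq_mul, mul_sub, mul_ite, mul_one, mul_zero, Finset.sum_sub_distrib, hsum]
  simp only [and_comm, hsum]

theorem eq_sum_smul_skewBasis {A : Matrix (Fin d) (Fin d) ℝ} (hA : Aᵀ = -A) :
    A = ∑ p : PairIdx d, A p.1.1 p.1.2 • skewBasis p := by
  ext i j
  have hskew : A j i = -A i j := congrFun₂ hA i j
  rw [sum_smul_skewBasis_apply]
  rcases lt_trichotomy i j with h | rfl | h
  · simp [h, h.not_gt]
  · simp
    linarith
  · simp [h, h.not_gt, hskew]

theorem cH_transpose_mul_self {ι : Type*} [Fintype ι] (V : Matrix ι (PairIdx d) ℝ)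
    (x : Fin d → ℝ) :
    cH (Vᵀ * V) x =
      ∑ k, (∑ p, V k p • skewBasis p) * vecMulVec x x * (∑ p, V k p • skewBasis p)ᵀ :=
  (sum_mul_mul_transpose_sum_smul V skewBasis _).symm

end SkewBasis

section Equivalences

variable {d : ℕ} {c : (Fin d → ℝ) → Matrix (Fin d) (Fin d) ℝ}

/-- Condition (iii), with the skew-symmetric matrices indexed by an arbitrary finite type. -/
def IsSkewSquareSum (ι : Type*) [Fintype ι] (c : (Fin d → ℝ) → Matrix (Fin d) (Fin d) ℝ) :
    Prop :=
  ∃ A : ι → Matrix (Fin d) (Fin d) ℝ,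
    (∀ k, (A k)ᵀ = -A k) ∧ ∀ x, c x = ∑ k, A k * vecMulVec x x * (A k)ᵀ

theorem IsSkewSquareSum.exists_cH {ι : Type*} [Fintype ι] (h : IsSkewSquareSum ι c) :
    ∃ H : Matrix (PairIdx d) (PairIdx d) ℝ,
      H.IsSymm ∧ (∀ u, 0 ≤ u ⬝ᵥ H *ᵥ u) ∧ ∀ x, c x = cH H x := by
  obtain ⟨A, hskew, hc⟩ := h
  let V : Matrix ι (PairIdx d) ℝ := .of fun k p => A k p.1.1 p.1.2
  obtain ⟨hsymm, hnonneg⟩ := posSemidef_iff_isSymm_and_nonneg.mp <| by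
    simpa [conjTranspose_eq_transpose_of_trivial] using posSemidef_conjTranspose_mul_self V
  refine ⟨Vᵀ * V, hsymm, hnonneg, fun x => ?_⟩
  rw [hc, cH_transpose_mul_self]
  refine Finset.sum_congr rfl fun k _ => ?_
  conv_lhs => rw [eq_sum_smul_skewBasis (hskew k)]
  rfl

theorem isSkewSquareSum_of_cH {H : Matrix (PairIdx d) (PairIdx d) ℝ} (hsymm : H.IsSymm)
    (hnonneg : ∀ u, 0 ≤ u ⬝ᵥ H *ᵥ u) (hc : ∀ x, c x = cH H x) : IsSkewSquareSum (PairIdx d) c := by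
  obtain ⟨B, rfl⟩ :=
    (posSemidef_iff_isSymm_and_nonneg.mpr ⟨hsymm, hnonneg⟩).exists_eq_conjTranspose_mul_self
  rw [conjTranspose_eq_transpose_of_trivial] at hc
  exact ⟨fun k => ∑ p, B k p • skewBasis p, fun k => transpose_sum_smul_skewBasis (B k),
    fun x => (hc x).trans (cH_transpose_mul_self B x)⟩

theorem exists_sum_sq_of_eq_sum {ι : Type*} [Fintype ι] (A : ι → Matrix (Fin d) (Fin d) ℝ)
    (hc : ∀ x, c x = ∑ k, A k * vecMulVec x x * (A k)ᵀ) :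
    ∃ (n : ℕ) (f : Fin n → MvPolynomial (Fin d ⊕ Fin d) ℝ),
      ∀ x y, y ⬝ᵥ c x *ᵥ y = ∑ k, eval (Sum.elim x y) (f k) ^ 2 := by
  let e := Fintype.equivFin ι
  refine ⟨Fintype.card ι, fun k => bilinPoly (A (e.symm k)), fun x y => ?_⟩
  simp only [hc, sum_mulVec, dotProduct_sum, dotProduct_mulVec_mul_vecMulVec_mul_transpose,
    eval_bilinPoly]
  exact (e.symm.sum_comp fun k => (y ⬝ᵥ A k *ᵥ x) ^ 2).symm

theorem exists_bihomogeneous_eval_eq (hhom : ∀ i j, IsHomPolyFun d 2 fun x => c x i j) :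
    ∃ q : MvPolynomial (Fin d ⊕ Fin d) ℝ, q.IsWeightedHomogeneous inlWeight 2 ∧
      q.IsWeightedHomogeneous inrWeight 2 ∧ ∀ x y, eval (Sum.elim x y) q = y ⬝ᵥ c x *ᵥ y := by
  choose P hP hcP using hhom
  refine ⟨∑ i, ∑ j, rename Sum.inl (P i j) * X (Sum.inr i) * X (Sum.inr j), ?_, ?_, fun x y => ?_⟩
  · refine IsWeightedHomogeneous.sum _ _ _ fun i _ => IsWeightedHomogeneous.sum _ _ _ fun j _ => ?_
    have hren : (P i j).IsWeightedHomogeneous (inlWeight (τ := Fin d) ∘ Sum.inl) 2 := hP i j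
    exact ((hren.rename.mul (isWeightedHomogeneous_X ℝ _ _)).mul
      (isWeightedHomogeneous_X ℝ _ _))
  · refine IsWeightedHomogeneous.sum _ _ _ fun i _ => IsWeightedHomogeneous.sum _ _ _ fun j _ => ?_
    have hren : (P i j).IsWeightedHomogeneous (inrWeight (τ := Fin d) ∘ Sum.inl) 0 :=
      fun u _ => by simp [Finsupp.weight_apply]
    exact ((hren.rename.mul (isWeightedHomogeneous_X ℝ _ _)).mul
      (isWeightedHomogeneous_X ℝ _ _))
  · simp only [map_sum, map_mul, eval_rename, eval_X, Sum.elim_inr, Function.comp_def,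
      Sum.elim_inl, ← hcP, dotProduct, mulVec, Finset.mul_sum]
    exact Finset.sum_congr rfl fun i _ => Finset.sum_congr rfl fun j _ => by ring

theorem isSkewSquareSum_of_sum_sq (hsymm : ∀ x, (c x).IsSymm)
    (hhom : ∀ i j, IsHomPolyFun d 2 fun x => c x i j) (hker : ∀ x, c x *ᵥ x = 0) {n : ℕ}
    (f : Fin n → MvPolynomial (Fin d ⊕ Fin d) ℝ)
    (hf : ∀ x y, y ⬝ᵥ c x *ᵥ y = ∑ k, eval (Sum.elim x y) (f k) ^ 2) :
    IsSkewSquareSum (Fin n) c := by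
  obtain ⟨q, hqx, hqy, hq⟩ := exists_bihomogeneous_eval_eq hhom
  have hfq : ∑ k, f k ^ 2 = q := MvPolynomial.funext fun z => by
    rw [← Sum.elim_comp_inl_inr z, hq, hf]
    simp
  choose B hB using fun k => exists_eval_sumElim_eq_dotProduct_mulVec
    (hfq ▸ hqx |>.of_sum_sq (Finset.mem_univ k)) (hfq ▸ hqy |>.of_sum_sq (Finset.mem_univ k))
  have hskew : ∀ k, (B k)ᵀ = -B k := fun k =>
    transpose_eq_neg_of_dotProduct_mulVec_self_eq_zero fun x => by
      have hsum := hf x x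
      simp only [hker x, dotProduct_zero, hB] at hsum
      exact IsFormallyReal.eq_zero_of_sum_sq_eq_zero hsum.symm (Finset.mem_univ k)
  refine ⟨B, hskew, fun x => (hsymm x).eq_of_dotProduct_mulVec_self_eq
    (Finset.univ.sum_induction _ IsSymm (fun _ _ => IsSymm.add) isSymm_zero fun k _ =>
      isSymm_mul_vecMulVec_mul_transpose (B k) x) fun y => ?_⟩
  simp only [hf, hB, sum_mulVec, dotProduct_sum, dotProduct_mulVec_mul_vecMulVec_mul_transpose]

end Equivalences

theorem stmt6_general (d : ℕ)
    (c : (Fin d → ℝ) → Matrix (Fin d) (Fin d) ℝ)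
    (hsymm : ∀ x, (c x).IsSymm)
    (hhom : ∀ i j, IsHomPolyFun d 2 (fun x => c x i j))
    (hker : ∀ x, (c x).mulVec x = 0) :
    -- (i) ↔ (ii)
    ((∃ (n : ℕ) (f : Fin n → MvPolynomial (Fin d ⊕ Fin d) ℝ),
        ∀ x y : Fin d → ℝ,
          y ⬝ᵥ (c x).mulVec y = ∑ k, (MvPolynomial.eval (Sum.elim x y) (f k)) ^ 2) ↔
      (∃ H : Matrix (PairIdx d) (PairIdx d) ℝ,
        H.IsSymm ∧ (∀ u : PairIdx d → ℝ, 0 ≤ u ⬝ᵥ H.mulVec u) ∧ ∀ x, c x = cH H x)) ∧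
    -- (ii) ↔ (iii)
    ((∃ H : Matrix (PairIdx d) (PairIdx d) ℝ,
        H.IsSymm ∧ (∀ u : PairIdx d → ℝ, 0 ≤ u ⬝ᵥ H.mulVec u) ∧ ∀ x, c x = cH H x) ↔
      (∃ A : PairIdx d → Matrix (Fin d) (Fin d) ℝ,
        (∀ p, (A p)ᵀ = -(A p)) ∧
        ∀ x, c x = ∑ p : PairIdx d, A p * Matrix.vecMulVec x x * (A p)ᵀ)) := by
  refine ⟨⟨fun ⟨n, f, hf⟩ => (isSkewSquareSum_of_sum_sq hsymm hhom hker f hf).exists_cH,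
    fun ⟨H, hH, hH', hc⟩ => ?_⟩,
    ⟨fun ⟨H, hH, hH', hc⟩ => isSkewSquareSum_of_cH hH hH' hc, IsSkewSquareSum.exists_cH⟩⟩
  obtain ⟨A, -, hcA⟩ := isSkewSquareSum_of_cH hH hH' hc
  exact exists_sum_sq_of_eq_sum A hcA

/-- For `c ∈ C` (symmetric homogeneous degree-2 entries, `c(x)x = 0`) the
following are equivalent: (i) the biquadratic form `yᵀ c(x) y` is a sum of squares of real
polynomials in `(x,y)`; (ii) `c = c_H` for some positive semidefinite symmetric `H ∈ S^m`;
(iii) `c(x) = ∑_{p=1}^m A_p x xᵀ A_pᵀ` for some skew-symmetric `A_1, …, A_m`. -/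
theorem stmt6 (d : ℕ) (hd : 1 ≤ d)
    (c : (Fin d → ℝ) → Matrix (Fin d) (Fin d) ℝ)
    (hsymm : ∀ x, (c x).IsSymm)
    (hhom : ∀ i j, IsHomPolyFun d 2 (fun x => c x i j))
    (hker : ∀ x, (c x).mulVec x = 0) :
    -- (i) ↔ (ii)
    ((∃ (n : ℕ) (f : Fin n → MvPolynomial (Fin d ⊕ Fin d) ℝ),
        ∀ x y : Fin d → ℝ,
          y ⬝ᵥ (c x).mulVec y = ∑ k, (MvPolynomial.eval (Sum.elim x y) (f k)) ^ 2) ↔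
      (∃ H : Matrix (PairIdx d) (PairIdx d) ℝ,
        H.IsSymm ∧ (∀ u : PairIdx d → ℝ, 0 ≤ u ⬝ᵥ H.mulVec u) ∧ ∀ x, c x = cH H x)) ∧
    -- (ii) ↔ (iii)
    ((∃ H : Matrix (PairIdx d) (PairIdx d) ℝ,
        H.IsSymm ∧ (∀ u : PairIdx d → ℝ, 0 ≤ u ⬝ᵥ H.mulVec u) ∧ ∀ x, c x = cH H x) ↔
      (∃ A : PairIdx d → Matrix (Fin d) (Fin d) ℝ,
        (∀ p, (A p)ᵀ = -(A p)) ∧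
        ∀ x, c x = ∑ p : PairIdx d, A p * Matrix.vecMulVec x x * (A p)ᵀ)) :=
  stmt6_general d c hsymm hhom hker
end

section
/- Let d ≥ 1 and let p : ℝ^d → ℝ be a polynomial function of total degree at most 2. Suppose the set E = { x ∈ ℝ^d : p(x) ≥ 0 } is compact and contains at least two points. Then the (constant) Hessian matrix ∇²p is negative definite, and E is the image of the closed Euclidean unit ball { x : ‖x‖ ≤ 1 } under an invertible affine map of ℝ^d. -/
/-!
Write `p x = xᵀ Q x + vᵀ x + r` with `Q` symmetric. Along any line `t ↦ a + t z` through a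
point `a` of `E` we have `p (a + t z) + p (a - t z) = 2 p a + 2 t² zᵀ Q z`, so if `zᵀ Q z ≥ 0`
one of `a ± t z` lies in `E` for every `t`, and `E` is unbounded. Hence `Q` is negative
definite, and completing the square at the critical point `c` of `p` gives
`p x = (x - c)ᵀ Q (x - c) + p c`. As `E` has two points, `p c > 0`, so `E` is the ellipsoid
`(x - c)ᵀ (-Q / p c) (x - c) ≤ 1`, the image of the unit ball under `y ↦ B⁻¹ y + c` for any
factorisation `-Q / p c = Bᵀ B`.
-/

open Matrix MvPolynomial

theorem Finsupp.eq_zero_or_single_or_add_single_of_degree_le_two {σ : Type*} {m : σ →₀ ℕ}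
    (hm : m.degree ≤ 2) :
    m = 0 ∨ (∃ i, m = single i 1) ∨ ∃ i j, m = single i 1 + single j 1 := by
  classical
  have hcard : Multiset.card (toMultiset m) ≤ 2 := by rwa [card_toMultiset]
  rw [← toMultiset_toFinsupp m]
  interval_cases h : Multiset.card (toMultiset m)
  · simp [Multiset.card_eq_zero.mp h]
  · obtain ⟨i, hi⟩ := Multiset.card_eq_one.mp h
    exact Or.inr <| Or.inl ⟨i, by rw [hi, Multiset.toFinsupp_singleton]⟩
  · obtain ⟨i, j, hij⟩ := Multiset.card_eq_two.mp h
    refine Or.inr <| Or.inr ⟨i, j, ?_⟩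
    rw [hij, Multiset.insert_eq_cons, ← Multiset.singleton_add, Multiset.toFinsupp_add,
      Multiset.toFinsupp_singleton, Multiset.toFinsupp_singleton]

section Quadratic

variable {ι R : Type*} [Fintype ι] [CommRing R]

variable (ι R) in
def quadraticFunctions : Submodule R ((ι → R) → R) where
  carrier := {f | ∃ (Q : Matrix ι ι R) (v : ι → R) (r : R), ∀ x, f x = x ⬝ᵥ Q *ᵥ x + v ⬝ᵥ x + r}
  zero_mem' := ⟨0, 0, 0, fun x => by simp⟩
  add_mem' := by
    rintro f g ⟨Q, v, r, hf⟩ ⟨Q', v', r', hg⟩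
    refine ⟨Q + Q', v + v', r + r', fun x => ?_⟩
    simp only [Pi.add_apply, hf, hg, add_mulVec, dotProduct_add, add_dotProduct]
    ring
  smul_mem' := by
    rintro c f ⟨Q, v, r, hf⟩
    refine ⟨c • Q, c • v, c • r, fun x => ?_⟩
    simp only [Pi.smul_apply, hf, smul_mulVec, dotProduct_smul, smul_dotProduct, smul_eq_mul]
    ring

theorem eval_monomial_mem_quadraticFunctions [DecidableEq ι] {m : ι →₀ ℕ} (hm : m.degree ≤ 2) :
    (fun x => eval x (monomial m (1 : R))) ∈ quadraticFunctions ι R := by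
  rcases Finsupp.eq_zero_or_single_or_add_single_of_degree_le_two hm with
    rfl | ⟨i, rfl⟩ | ⟨i, j, rfl⟩
  · exact ⟨0, 0, 1, fun x => by simp⟩
  · exact ⟨0, Pi.single i 1, 0, fun x => by simp [eval_monomial]⟩
  · refine ⟨Matrix.single i j 1, 0, 0, fun x => ?_⟩
    rw [monomial_single_add, ← X_pow_eq_monomial]
    simp [single_mulVec_eq, mul_comm]

theorem eval_mem_quadraticFunctions {P : MvPolynomial ι R} (hP : P.totalDegree ≤ 2) :
    (fun x => eval x P) ∈ quadraticFunctions ι R := by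
  classical
  have hP' :
      (fun x => eval x P) = ∑ m ∈ P.support, P.coeff m • fun x => eval x (monomial m 1) := by
    ext x
    rw [Finset.sum_apply]
    conv_lhs => rw [P.as_sum, map_sum]
    simp only [Pi.smul_apply, smul_eq_mul, eval_monomial, one_mul]
  rw [hP']
  exact Submodule.sum_mem _ fun m hm =>
    Submodule.smul_mem _ _ (eval_monomial_mem_quadraticFunctions ((le_totalDegree hm).trans hP))

theorem exists_isSymm_of_mem_quadraticFunctions [Invertible (2 : R)] {f : (ι → R) → R}
    (hf : f ∈ quadraticFunctions ι R) : ∃ Q : Matrix ι ι R, Q.IsSymm ∧ ∃ (v : ι → R) (r : R),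
      ∀ x, f x = x ⬝ᵥ Q *ᵥ x + v ⬝ᵥ x + r := by
  obtain ⟨Q, v, r, hf⟩ := hf
  refine ⟨⅟(2 : R) • (Q + Qᵀ), by simp [IsSymm, add_comm], v, r, fun x => ?_⟩
  have hT : x ⬝ᵥ Qᵀ *ᵥ x = x ⬝ᵥ Q *ᵥ x := by
    rw [dotProduct_mulVec, vecMul_transpose, dotProduct_comm]
  rw [hf, smul_mulVec, add_mulVec, dotProduct_smul, dotProduct_add, hT, smul_eq_mul,
    ← two_mul, invOf_mul_cancel_left]

variable {f : (ι → R) → R} {Q : Matrix ι ι R} {v : ι → R} {r : R}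

theorem quadratic_add_add_sub (hf : ∀ x, f x = x ⬝ᵥ Q *ᵥ x + v ⬝ᵥ x + r) (a z : ι → R) :
    f (a + z) + f (a - z) = 2 * f a + 2 * (z ⬝ᵥ Q *ᵥ z) := by
  simp only [hf, mulVec_add, mulVec_sub, dotProduct_add, dotProduct_sub, add_dotProduct,
    sub_dotProduct]
  ring

theorem quadratic_eq_sub_add (hQ : Q.IsSymm) (hf : ∀ x, f x = x ⬝ᵥ Q *ᵥ x + v ⬝ᵥ x + r)
    {c : ι → R} (hc : (2 : R) • (Q *ᵥ c) = -v) (x : ι → R) :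
    f x = (x - c) ⬝ᵥ Q *ᵥ (x - c) + f c := by
  have hsymm : c ⬝ᵥ Q *ᵥ x = x ⬝ᵥ Q *ᵥ c := by
    rw [dotProduct_mulVec, ← mulVec_transpose, hQ.eq, dotProduct_comm]
  have hv : ∀ y, v ⬝ᵥ y = -(2 * (y ⬝ᵥ Q *ᵥ c)) := fun y => by
    rw [← neg_neg v, ← hc, neg_dotProduct, dotProduct_comm, dotProduct_smul, smul_eq_mul]
  simp only [hf, mulVec_sub, dotProduct_sub, sub_dotProduct, hsymm, hv]
  ring

end Quadratic

section Ellipsoid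

variable {n : Type*} [Fintype n] [DecidableEq n]

open scoped MatrixOrder in
theorem Matrix.PosDef.exists_isUnit_eq_transpose_mul_self {A : Matrix n n ℝ} (hA : A.PosDef) :
    ∃ B : Matrix n n ℝ, IsUnit B ∧ A = Bᵀ * B := by
  obtain ⟨B, hB, rfl⟩ :=
    CStarAlgebra.isStrictlyPositive_iff_eq_star_mul_self.mp hA.isStrictlyPositive
  exact ⟨B, hB, rfl⟩

theorem Matrix.PosDef.exists_isUnit_setOf_le_one_eq_image {A : Matrix n n ℝ} (hA : A.PosDef)
    (c : n → ℝ) : ∃ M : Matrix n n ℝ, IsUnit M ∧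
      {x | (x - c) ⬝ᵥ A *ᵥ (x - c) ≤ 1} = (fun y => M *ᵥ y + c) '' {y | y ⬝ᵥ y ≤ 1} := by
  obtain ⟨B, hB, rfl⟩ := hA.exists_isUnit_eq_transpose_mul_self
  have hBdet : IsUnit B.det := (isUnit_iff_isUnit_det B).mp hB
  refine ⟨B⁻¹, isUnit_nonsing_inv_iff.mpr hB, ?_⟩
  rw [Set.image_eq_preimage_of_inverse (g := fun x => B *ᵥ (x - c))]
  · ext x
    simp only [Set.mem_ofPred_eq, Set.mem_preimage, ← mulVec_mulVec, dotProduct_mulVec,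
      vecMul_transpose]
  · intro y
    simp [mulVec_mulVec, mul_nonsing_inv _ hBdet]
  · intro x
    simp [mulVec_mulVec, nonsing_inv_mul _ hBdet]

end Ellipsoid

section Real

variable {ι : Type*} [Fintype ι] {f : (ι → ℝ) → ℝ} {Q : Matrix ι ι ℝ} {v : ι → ℝ} {r : ℝ}

theorem dotProduct_mulVec_neg_of_isBounded (hf : ∀ x, f x = x ⬝ᵥ Q *ᵥ x + v ⬝ᵥ x + r)
    (hE : Bornology.IsBounded {x | 0 ≤ f x}) {a : ι → ℝ} (ha : 0 ≤ f a) {z : ι → ℝ}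
    (hz : z ≠ 0) : z ⬝ᵥ Q *ᵥ z < 0 := by
  by_contra! hq
  obtain ⟨C, hC⟩ := (Metric.isBounded_iff_subset_closedBall a).mp hE
  have hline (t : ℝ) : ‖t • z‖ ≤ C := by
    have hsum := quadratic_add_add_sub hf a (t • z)
    have hqt : 0 ≤ (t • z) ⬝ᵥ Q *ᵥ (t • z) := by
      simp only [mulVec_smul, dotProduct_smul, smul_dotProduct, smul_eq_mul]
      nlinarith [mul_self_nonneg t]
    rcases le_total 0 (f (a + t • z)) with h | h
    · simpa [dist_eq_norm] using hC h
    · simpa [dist_eq_norm] using hC (show 0 ≤ f (a - t • z) by linarith)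
  have hz' : 0 < ‖z‖ := norm_pos_iff.mpr hz
  have := hline ((|C| + 1) / ‖z‖)
  rw [norm_smul, Real.norm_eq_abs, abs_of_pos (by positivity), div_mul_cancel₀ _ hz'.ne'] at this
  linarith [le_abs_self C]

theorem Matrix.IsSymm.posDef_neg (hQ : Q.IsSymm) (hneg : ∀ z, z ≠ 0 → z ⬝ᵥ Q *ᵥ z < 0) :
    (-Q).PosDef :=
  .of_dotProduct_mulVec_pos (isHermitian_iff_isSymm.mpr hQ.neg) fun z hz => by
    simpa [neg_mulVec] using hneg z hz

theorem exists_isUnit_setOf_nonneg_eq_image [DecidableEq ι] (hQ : Q.IsSymm)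
    (hf : ∀ x, f x = x ⬝ᵥ Q *ᵥ x + v ⬝ᵥ x + r) (hneg : ∀ z, z ≠ 0 → z ⬝ᵥ Q *ᵥ z < 0)
    {a b : ι → ℝ} (ha : 0 ≤ f a) (hb : 0 ≤ f b) (hab : a ≠ b) :
    ∃ (M : Matrix ι ι ℝ) (w : ι → ℝ), IsUnit M ∧
      {x | 0 ≤ f x} = (fun y => M *ᵥ y + w) '' {y | y ⬝ᵥ y ≤ 1} := by
  have hNQ := hQ.posDef_neg hneg
  have hQdet : IsUnit Q.det := (isUnit_iff_isUnit_det Q).mp (by simpa using hNQ.isUnit.neg)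
  set c := Q⁻¹ *ᵥ (-(2 : ℝ)⁻¹ • v)
  have hc : (2 : ℝ) • (Q *ᵥ c) = -v := by
    rw [mulVec_mulVec, mul_nonsing_inv _ hQdet, one_mulVec, smul_smul]
    norm_num
  have hsq := quadratic_eq_sub_add hQ hf hc
  have hfc : 0 < f c := by
    obtain ⟨x, hx, hxc⟩ : ∃ x, 0 ≤ f x ∧ x ≠ c := by
      by_cases hac : a = c
      · exact ⟨b, hb, fun hbc => hab (hac.trans hbc.symm)⟩
      · exact ⟨a, ha, hac⟩
    linarith [hsq x, hneg (x - c) (sub_ne_zero.mpr hxc)]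
  obtain ⟨M, hM, hME⟩ := (hNQ.smul (inv_pos.mpr hfc)).exists_isUnit_setOf_le_one_eq_image c
  refine ⟨M, c, hM, ?_⟩
  rw [← hME]
  ext x
  simp only [Set.mem_ofPred_eq, smul_mulVec, neg_mulVec, dotProduct_smul, dotProduct_neg,
    smul_eq_mul, hsq x]
  rw [inv_mul_le_one₀ hfc]
  constructor <;> intro h <;> linarith

end Real

theorem stmt17_general (d : ℕ)
    (P : MvPolynomial (Fin d) ℝ) (hdeg : P.totalDegree ≤ 2)
    (hcpt : IsCompact {x : Fin d → ℝ | 0 ≤ MvPolynomial.eval x P})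
    (htwo : ∃ a b : Fin d → ℝ, 0 ≤ MvPolynomial.eval a P ∧ 0 ≤ MvPolynomial.eval b P ∧
      a ≠ b) :
    (∀ Q : Matrix (Fin d) (Fin d) ℝ, Q.IsSymm → ∀ v : Fin d → ℝ, ∀ r : ℝ,
      (∀ x, MvPolynomial.eval x P = x ⬝ᵥ Q.mulVec x + v ⬝ᵥ x + r) →
      ∀ z : Fin d → ℝ, z ≠ 0 → z ⬝ᵥ Q.mulVec z < 0) ∧
    (∃ (M : Matrix (Fin d) (Fin d) ℝ) (v : Fin d → ℝ), IsUnit M ∧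
      {x : Fin d → ℝ | 0 ≤ MvPolynomial.eval x P} =
        (fun x => M.mulVec x + v) '' {x : Fin d → ℝ | x ⬝ᵥ x ≤ 1}) := by
  obtain ⟨a, b, ha, hb, hab⟩ := htwo
  refine ⟨fun Q _ v r hf z hz => dotProduct_mulVec_neg_of_isBounded hf hcpt.isBounded ha hz, ?_⟩
  obtain ⟨Q, hQ, v, r, hf⟩ :=
    exists_isSymm_of_mem_quadraticFunctions (eval_mem_quadraticFunctions hdeg)
  exact exists_isUnit_setOf_nonneg_eq_image hQ hf
    (fun z hz => dotProduct_mulVec_neg_of_isBounded hf hcpt.isBounded ha hz) ha hb hab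

/-- Let `p : ℝ^d → ℝ` be a polynomial function of total degree at most 2
and suppose `E = {x : p(x) ≥ 0}` is compact and contains at least two points. Then the
(constant) Hessian of `p` is negative definite — i.e. in any representation
`p(x) = xᵀ Q x + vᵀ x + r` with `Q` symmetric (so the Hessian is `2Q`), `Q` is negative
definite — and `E` is the image of the closed Euclidean unit ball under an invertible
affine map of `ℝ^d`. -/
theorem stmt17 (d : ℕ) (hd : 1 ≤ d)
    (P : MvPolynomial (Fin d) ℝ) (hdeg : P.totalDegree ≤ 2)
    (hcpt : IsCompact {x : Fin d → ℝ | 0 ≤ MvPolynomial.eval x P})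
    (htwo : ∃ a b : Fin d → ℝ, 0 ≤ MvPolynomial.eval a P ∧ 0 ≤ MvPolynomial.eval b P ∧
      a ≠ b) :
    (∀ Q : Matrix (Fin d) (Fin d) ℝ, Q.IsSymm → ∀ v : Fin d → ℝ, ∀ r : ℝ,
      (∀ x, MvPolynomial.eval x P = x ⬝ᵥ Q.mulVec x + v ⬝ᵥ x + r) →
      ∀ z : Fin d → ℝ, z ≠ 0 → z ⬝ᵥ Q.mulVec z < 0) ∧
    (∃ (M : Matrix (Fin d) (Fin d) ℝ) (v : Fin d → ℝ), IsUnit M ∧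
      {x : Fin d → ℝ | 0 ≤ MvPolynomial.eval x P} =
        (fun x => M.mulVec x + v) '' {x : Fin d → ℝ | x ⬝ᵥ x ≤ 1}) :=
  stmt17_general d P hdeg hcpt htwo
end
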